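/- arXiv:2009.03052 — 7 statements merged into one kernel-verified Lean document; each statement's English description precedes it below -/
import Mathlib

section
/- Let V be a finite set, let k ≥ 1 be an integer, and color each element of V independently and uniformly at random with a color in {0, …, k−1}. If S₁, S₂ ⊆ V are subsets with |S₁ ∩ S₂| ≤ 1, then the events 'S₁ is colorful' and 'S₂ is colorful' are independent. -/
set_option linter.unusedSectionVars false


open MeasureTheory

section Aux

variable {V : Type*} [Fintype V] [DecidableEq V] {k : ℕ} [NeZero k]

private lemma injOn_congr_aux {S : Finset V} {c c' : V → Fin k}
    (h : ∀ i ∈ S, c i = c' i) (hc : Set.InjOn c ↑S) : Set.InjOn c' ↑S := by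
  intro a ha b hb hab
  exact hc ha hb (by rw [h a ha, h b hb]; exact hab)

private lemma injOn_congr {S : Finset V} {c c' : V → Fin k}
    (h : ∀ i ∈ S, c i = c' i) : Set.InjOn c ↑S ↔ Set.InjOn c' ↑S :=
  ⟨injOn_congr_aux h, injOn_congr_aux fun i hi => (h i hi).symm⟩

/-- Independence for events depending on complementary coordinate blocks. -/
private lemma indep_helper (p : V → Prop) [DecidablePred p] (A B : Set (V → Fin k))
    (hA : ∀ c c' : V → Fin k, (∀ i, p i → c i = c' i) → (c ∈ A ↔ c' ∈ A))
    (hB : ∀ c c' : V → Fin k, (∀ i, ¬ p i → c i = c' i) → (c ∈ B ↔ c' ∈ B)) :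
    (Measure.pi fun _ : V => (PMF.uniformOfFintype (Fin k)).toMeasure) (A ∩ B)
      = (Measure.pi fun _ : V => (PMF.uniformOfFintype (Fin k)).toMeasure) A *
        (Measure.pi fun _ : V => (PMF.uniformOfFintype (Fin k)).toMeasure) B := by
  set e := MeasurableEquiv.piEquivPiSubtypeProd (fun _ : V => Fin k) p with he
  have hmp := MeasureTheory.measurePreserving_piEquivPiSubtypeProd
    (fun _ : V => (PMF.uniformOfFintype (Fin k)).toMeasure) p
  set A' : Set ({i // p i} → Fin k) := (fun (c : V → Fin k) (i : {i // p i}) => c i.1) '' A with hA'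
  set B' : Set ({i // ¬ p i} → Fin k) :=
    (fun (c : V → Fin k) (i : {i // ¬ p i}) => c i.1) '' B with hB'
  have hAe : A = e ⁻¹' (A' ×ˢ Set.univ) := by
    ext c
    simp only [Set.mem_preimage, Set.mem_prod, Set.mem_univ, and_true, hA', Set.mem_image]
    constructor
    · intro hc; exact ⟨c, hc, rfl⟩
    · rintro ⟨a, ha, hac⟩
      exact (hA a c (fun i hi => congrFun hac ⟨i, hi⟩)).mp ha
  have hBe : B = e ⁻¹' (Set.univ ×ˢ B') := by
    ext c
    simp only [Set.mem_preimage, Set.mem_prod, Set.mem_univ, true_and, hB', Set.mem_image]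
    constructor
    · intro hc; exact ⟨c, hc, rfl⟩
    · rintro ⟨a, ha, hac⟩
      exact (hB a c (fun i hi => congrFun hac ⟨i, hi⟩)).mp ha
  have hA'm : MeasurableSet A' := A'.toFinite.measurableSet
  have hB'm : MeasurableSet B' := B'.toFinite.measurableSet
  rw [hAe, hBe, ← Set.preimage_inter, Set.prod_inter_prod, Set.univ_inter, Set.inter_univ,
    hmp.measure_preimage (hA'm.prod hB'm).nullMeasurableSet,
    hmp.measure_preimage (hA'm.prod MeasurableSet.univ).nullMeasurableSet,
    hmp.measure_preimage (MeasurableSet.univ.prod hB'm).nullMeasurableSet,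
    Measure.prod_prod, Measure.prod_prod, Measure.prod_prod]
  simp only [measure_univ, mul_one, one_mul]

/-- Partition by the value at a coordinate. -/
private lemma partition_lemma (A : Set (V → Fin k)) (x : V) :
    (Measure.pi fun _ : V => (PMF.uniformOfFintype (Fin k)).toMeasure) A
      = ∑ v : Fin k,
        (Measure.pi fun _ : V => (PMF.uniformOfFintype (Fin k)).toMeasure)
          (A ∩ {c | c x = v}) := by
  have hA : A = ⋃ v ∈ (Finset.univ : Finset (Fin k)), A ∩ {c | c x = v} := by
    ext c
    simp only [Set.mem_iUnion, Finset.mem_univ, Set.mem_inter_iff, Set.mem_setOf_eq,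
      exists_prop, true_and]
    exact ⟨fun hc => ⟨c x, hc, rfl⟩, fun ⟨v, hc, _⟩ => hc⟩
  conv_lhs => rw [hA]
  exact measure_biUnion_finset
    (fun v _ w _ hvw => Set.disjoint_left.mpr
      (by rintro c ⟨-, hv⟩ ⟨-, hw⟩; exact hvw (hv ▸ hw ▸ rfl)))
    (fun v _ => (A ∩ {c | c x = v}).toFinite.measurableSet)

private lemma perm_preserving (σ : Equiv.Perm (Fin k)) :
    MeasurePreserving (fun (c : V → Fin k) i => σ (c i))
      (Measure.pi fun _ : V => (PMF.uniformOfFintype (Fin k)).toMeasure)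
      (Measure.pi fun _ : V => (PMF.uniformOfFintype (Fin k)).toMeasure) := by
  refine measurePreserving_pi _ _ (fun i => ?_)
  have hmap : (PMF.uniformOfFintype (Fin k)).map σ = PMF.uniformOfFintype (Fin k) := by
    ext b
    rw [PMF.map_apply, tsum_eq_single (σ.symm b)]
    · simp
    · intro a ha
      simp only [ite_eq_right_iff]
      intro h; exact absurd (σ.eq_symm_apply.mpr h.symm) ha
  refine ⟨measurable_of_countable _, ?_⟩
  have h2 := PMF.toMeasure_map (PMF.uniformOfFintype (Fin k)) (f := ⇑σ) (measurable_of_countable _)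
  rw [hmap] at h2
  exact h2

/-- Slice lemma: the colorful event intersected with a fixed color at `x`. -/
private lemma slice_lemma (S : Finset V) (x : V) (v : Fin k) :
    (Measure.pi fun _ : V => (PMF.uniformOfFintype (Fin k)).toMeasure)
        ({c : V → Fin k | Set.InjOn c ↑S} ∩ {c | c x = v})
      = (Measure.pi fun _ : V => (PMF.uniformOfFintype (Fin k)).toMeasure)
          {c : V → Fin k | Set.InjOn c ↑S} * (k : ENNReal)⁻¹ := by
  set μ := (Measure.pi fun _ : V => (PMF.uniformOfFintype (Fin k)).toMeasure) with hμ
  set A : Set (V → Fin k) := {c | Set.InjOn c ↑S} with hA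
  have key : ∀ w : Fin k, μ (A ∩ {c | c x = w}) = μ (A ∩ {c | c x = v}) := by
    intro w
    set σ : Equiv.Perm (Fin k) := Equiv.swap v w with hσ
    have hmp := perm_preserving (V := V) σ
    have hpre : (fun (c : V → Fin k) i => σ (c i)) ⁻¹' (A ∩ {c | c x = w})
        = A ∩ {c | c x = v} := by
      ext c
      simp only [Set.mem_preimage, Set.mem_inter_iff, Set.mem_setOf_eq, hA]
      constructor
      · rintro ⟨h1, h2⟩
        refine ⟨fun a ha b hb hab => h1 ha hb (by simp only [hab]), ?_⟩
        have : c x = σ.symm w := σ.eq_symm_apply.mpr h2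
        rw [this, hσ]; simp [Equiv.symm_swap, Equiv.swap_apply_right]
      · rintro ⟨h1, h2⟩
        refine ⟨fun a ha b hb hab => h1 ha hb (σ.injective hab), ?_⟩
        rw [h2, hσ]; simp [Equiv.swap_apply_left]
    rw [← hpre, hmp.measure_preimage (A ∩ {c | c x = w}).toFinite.measurableSet.nullMeasurableSet]
  have hsum := partition_lemma (k := k) A x
  rw [Finset.sum_congr rfl (fun w _ => key w), Finset.sum_const, Finset.card_univ,
    Fintype.card_fin, nsmul_eq_mul] at hsum
  have hk0 : (k : ENNReal) ≠ 0 := by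
    exact_mod_cast Nat.cast_ne_zero.mpr (NeZero.ne k)
  have hktop : (k : ENNReal) ≠ ⊤ := ENNReal.natCast_ne_top k
  calc μ (A ∩ {c | c x = v}) = (k : ENNReal)⁻¹ * ((k : ENNReal) * μ (A ∩ {c | c x = v})) := by
        rw [← mul_assoc, ENNReal.inv_mul_cancel hk0 hktop, one_mul]
    _ = (k : ENNReal)⁻¹ * μ A := by rw [← hsum]
    _ = μ A * (k : ENNReal)⁻¹ := mul_comm _ _

end Aux

/-- Color each element of a finite set V independently and uniformly at random
with one of k ≥ 1 colors. If S₁, S₂ ⊆ V share at most one element, then the events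
'S₁ is colorful' and 'S₂ is colorful' are independent. -/
theorem colorful_events_independent {V : Type*} [Fintype V] [DecidableEq V]
    (k : ℕ) (hk : 1 ≤ k) [NeZero k] (S₁ S₂ : Finset V) (hS : (S₁ ∩ S₂).card ≤ 1) :
    (Measure.pi fun _ : V => (PMF.uniformOfFintype (Fin k)).toMeasure)
        ({c : V → Fin k | Set.InjOn c ↑S₁} ∩ {c : V → Fin k | Set.InjOn c ↑S₂})
      = (Measure.pi fun _ : V => (PMF.uniformOfFintype (Fin k)).toMeasure)
          {c : V → Fin k | Set.InjOn c ↑S₁}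
        * (Measure.pi fun _ : V => (PMF.uniformOfFintype (Fin k)).toMeasure)
          {c : V → Fin k | Set.InjOn c ↑S₂} := by
  set μ := (Measure.pi fun _ : V => (PMF.uniformOfFintype (Fin k)).toMeasure) with hμ
  set A₁ : Set (V → Fin k) := {c | Set.InjOn c ↑S₁} with hA₁
  set A₂ : Set (V → Fin k) := {c | Set.InjOn c ↑S₂} with hA₂
  interval_cases h : (S₁ ∩ S₂).card
  · -- disjoint case
    have hdisj : S₁ ∩ S₂ = ∅ := Finset.card_eq_zero.mp h
    refine indep_helper (· ∈ S₁) A₁ A₂ ?_ ?_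
    · intro c c' hcc
      exact injOn_congr (fun i hi => hcc i hi)
    · intro c c' hcc
      refine injOn_congr (fun i hi => hcc i ?_)
      intro hi1
      exact absurd (Finset.mem_inter.mpr ⟨hi1, hi⟩) (by simp [hdisj])
  · -- shared element case
    obtain ⟨x, hx⟩ := Finset.card_eq_one.mp h
    have hx1 : x ∈ S₁ := (Finset.mem_inter.mp (hx ▸ Finset.mem_singleton_self x)).1
    have hx2 : x ∈ S₂ := (Finset.mem_inter.mp (hx ▸ Finset.mem_singleton_self x)).2
    have honly : ∀ i ∈ S₂, i ≠ x → i ∉ S₁ := by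
      intro i hi2 hix hi1
      exact hix (Finset.mem_singleton.mp (hx ▸ Finset.mem_inter.mpr ⟨hi1, hi2⟩))
    set E : Fin k → Set (V → Fin k) := fun v => {c | c x = v} with hE
    set D : Fin k → Set (V → Fin k) :=
      fun v => {c | Set.InjOn (Function.update c x v) ↑S₂} with hD
    have hDE : ∀ v, A₂ ∩ E v = D v ∩ E v := by
      intro v
      ext c
      simp only [Set.mem_inter_iff, Set.mem_setOf_eq, hA₂, hD, hE]
      constructor
      · rintro ⟨h1, h2⟩; exact ⟨by rw [← h2, Function.update_eq_self]; exact h1, h2⟩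
      · rintro ⟨h1, h2⟩; refine ⟨?_, h2⟩; rwa [← h2, Function.update_eq_self] at h1
    have hDcongr : ∀ v (c c' : V → Fin k), (∀ i ∈ S₂, i ≠ x → c i = c' i) →
        (c ∈ D v ↔ c' ∈ D v) := by
      intro v c c' hcc
      simp only [hD, Set.mem_setOf_eq]
      refine injOn_congr (fun i hi => ?_)
      by_cases hix : i = x
      · subst hix; simp [Function.update_self]
      · rw [Function.update_of_ne hix, Function.update_of_ne hix]
        exact hcc i hi hix
    -- μ(Dv ∩ Ev) = μ(Ev) * μ(Dv) won't be needed directly; compute both sums.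
    have hEv : ∀ v, μ (E v) = (k : ENNReal)⁻¹ := by
      intro v
      have huniv : {c : V → Fin k | Set.InjOn c (↑(∅ : Finset V))} = Set.univ := by
        ext c; simp [Set.InjOn]
      have hsl := slice_lemma (V := V) (∅ : Finset V) x v
      rw [huniv, Set.univ_inter, measure_univ, one_mul] at hsl
      exact hsl
    have step1 : ∀ v, μ (A₁ ∩ A₂ ∩ E v) = μ A₁ * (k : ENNReal)⁻¹ * μ (D v) := by
      intro v
      have : A₁ ∩ A₂ ∩ E v = (A₁ ∩ E v) ∩ D v := by
        rw [Set.inter_assoc, Set.inter_comm (A₂) (E v), ← Set.inter_assoc,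
          Set.inter_assoc A₁ (E v), Set.inter_comm (E v) (A₂), hDE v,
          Set.inter_comm (D v) (E v), ← Set.inter_assoc]
      rw [this, indep_helper (· ∈ S₁) (A₁ ∩ E v) (D v) ?_ ?_, slice_lemma S₁ x v]
      · intro c c' hcc
        simp only [Set.mem_inter_iff, Set.mem_setOf_eq, hA₁, hE]
        rw [injOn_congr (fun i hi => hcc i hi), hcc x hx1]
      · intro c c' hcc
        exact hDcongr v c c' (fun i hi hix => hcc i (honly i hi hix))
    have step2 : ∀ v, μ (A₂ ∩ E v) = (k : ENNReal)⁻¹ * μ (D v) := by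
      intro v
      rw [hDE v, Set.inter_comm, indep_helper (· = x) (E v) (D v) ?_ ?_, hEv v]
      · intro c c' hcc
        simp only [Set.mem_setOf_eq, hE, hcc x rfl]
      · intro c c' hcc
        exact hDcongr v c c' (fun i _ hix => hcc i hix)
    rw [partition_lemma (A₁ ∩ A₂) x, partition_lemma A₂ x]
    calc (∑ v : Fin k, μ (A₁ ∩ A₂ ∩ E v))
        = ∑ v : Fin k, μ A₁ * ((k : ENNReal)⁻¹ * μ (D v)) := by
          refine Finset.sum_congr rfl (fun v _ => ?_)
          rw [step1 v, mul_assoc]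
      _ = μ A₁ * ∑ v : Fin k, (k : ENNReal)⁻¹ * μ (D v) := by rw [Finset.mul_sum]
      _ = μ A₁ * ∑ v : Fin k, μ (A₂ ∩ E v) := by
          rw [Finset.sum_congr rfl (fun v _ => (step2 v).symm)]
end

section
/- Let k ≥ 3 be an integer, let H be a connected simple graph on k vertices, and let G be a finite simple graph with maximum degree Δ. Then for every pair of distinct vertices u, v of G, the number of induced copies of H in G that contain both u and v is at most (k−1)! · Δ^{k−2} − 1. -/
open Finset

private lemma prodAux (m d : ℕ) :
    (∏ i : Fin m, (((i : ℕ) + 2) * d)) = (m + 1).factorial * d ^ m := by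
  induction m with
  | zero => simp
  | succ n ih =>
    rw [Fin.prod_univ_castSucc]
    simp only [Fin.coe_castSucc, Fin.val_last]
    rw [ih, Nat.factorial_succ (n+1)]
    ring

private lemma walkCross {V : Type*} [DecidableEq V] (G : SimpleGraph V) (S : Finset V)
    (A : Finset V) :
    ∀ {a b : ↥(S : Set V)} (_ : (G.induce (S : Set V)).Walk a b), (↑a : V) ∈ A → (↑b : V) ∉ A →
    ∃ z ∈ A, ∃ w ∈ S, w ∉ A ∧ G.Adj z w := by
  intro a b p
  induction p with
  | nil => intro h1 h2; exact absurd h1 h2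
  | @cons x y z h q ih =>
    intro ha hb
    by_cases hy : (↑y : V) ∈ A
    · exact ih hy hb
    · exact ⟨↑x, ha, ↑y, Finset.mem_coe.mp y.2, hy, h⟩

private lemma existsSeq {V : Type*} [DecidableEq V] (G : SimpleGraph V) (S : Finset V)
    (u v : V) (hu : u ∈ S) (hv : v ∈ S) (huv : u ≠ v)
    (hconn : (G.induce (S : Set V)).Preconnected) :
    ∀ n, 2 ≤ n → n ≤ S.card → ∃ x : ℕ → V, x 0 = u ∧ x 1 = v ∧ (∀ i < n, x i ∈ S) ∧
      (∀ i < n, ∀ j < n, x i = x j → i = j) ∧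
      (∀ i, 2 ≤ i → i < n → ∃ j < i, G.Adj (x j) (x i)) := by
  intro n
  induction n with
  | zero => omega
  | succ n ih =>
    intro h2 hle
    rcases Nat.lt_or_ge n 2 with hn | hn
    · -- n + 1 = 2
      have hn1 : n = 1 := by omega
      subst hn1
      refine ⟨fun i => if i = 0 then u else v, by simp, by simp, ?_, ?_, by omega⟩
      · intro i hi
        interval_cases i <;> simp [hu, hv]
      · intro i hi j hj
        interval_cases i <;> interval_cases j <;> simp [huv, huv.symm]
    · obtain ⟨x, h0, h1, hmem, hinj, hadj⟩ := ih hn (by omega)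
      set A : Finset V := (Finset.range n).image x with hA
      have hAS : A ⊆ S := by
        intro a ha
        obtain ⟨i, hi, rfl⟩ := Finset.mem_image.mp ha
        exact hmem i (Finset.mem_range.mp hi)
      have hAcard : A.card < S.card := by
        calc A.card ≤ n := (Finset.card_image_le).trans_eq (Finset.card_range n)
        _ < S.card := by omega
      obtain ⟨b, hbS, hbA⟩ : ∃ b ∈ S, b ∉ A := by
        by_contra hcon
        push_neg at hcon
        exact absurd (Finset.card_le_card hcon) (by omega)
      have haA : u ∈ A := by
        refine Finset.mem_image.mpr ⟨0, Finset.mem_range.mpr (by omega), h0⟩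
      obtain ⟨p⟩ := hconn ⟨u, hu⟩ ⟨b, hbS⟩
      obtain ⟨z, hzA, w, hwS, hwA, hzw⟩ := walkCross G S A p haA hbA
      obtain ⟨j0, hj0, hj0x⟩ := Finset.mem_image.mp hzA
      rw [Finset.mem_range] at hj0
      refine ⟨Function.update x n w, ?_, ?_, ?_, ?_, ?_⟩
      · rw [Function.update_of_ne (by omega) _ _, h0]
      · rw [Function.update_of_ne (by omega) _ _, h1]
      · intro i hi
        rcases Nat.lt_or_ge i n with h | h
        · rw [Function.update_of_ne (by omega) _ _]; exact hmem i h
        · have : i = n := by omega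
          subst this
          rw [Function.update_self]; exact hwS
      · intro i hi j hj hij
        rcases Nat.lt_or_ge i n with h | h <;> rcases Nat.lt_or_ge j n with h' | h'
        · rw [Function.update_of_ne (by omega), Function.update_of_ne (by omega)] at hij
          exact hinj i h j h' hij
        · have : j = n := by omega
          subst this
          rw [Function.update_of_ne (by omega), Function.update_self] at hij
          exact absurd (Finset.mem_image.mpr ⟨i, Finset.mem_range.mpr h, hij⟩) hwA
        · have : i = n := by omega
          subst this
          rw [Function.update_self, Function.update_of_ne (by omega)] at hij
          exact absurd (Finset.mem_image.mpr ⟨j, Finset.mem_range.mpr h', hij.symm⟩) hwA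
        · omega
      · intro i h2i hi
        rcases Nat.lt_or_ge i n with h | h
        · obtain ⟨j, hj, hadj'⟩ := hadj i h2i h
          refine ⟨j, hj, ?_⟩
          rwa [Function.update_of_ne (by omega), Function.update_of_ne (by omega)]
        · have : i = n := by omega
          subst this
          refine ⟨j0, hj0, ?_⟩
          rw [Function.update_of_ne (by omega), Function.update_self, hj0x]
          exact hzw



private lemma firstNeighbor {V' : Type*} (G' : SimpleGraph V') {a b : V'}
    (p : G'.Walk a b) (hab : a ≠ b) : ∃ y, G'.Adj a y := by
  cases p with
  | nil => exact absurd rfl hab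
  | cons h q => exact ⟨_, h⟩

/-- An induced copy of `H` in `G` through a fixed pair of vertices `u, v` is a set `S` of
vertices of `G` containing `u` and `v` whose induced subgraph is isomorphic to `H`. -/
noncomputable def copiesThrough {V W : Type*} (G : SimpleGraph V) (H : SimpleGraph W)
    (u v : V) : ℕ :=
  Nat.card {S : Finset V // u ∈ S ∧ v ∈ S ∧ Nonempty (G.induce (↑S : Set V) ≃g H)}

set_option maxHeartbeats 1000000 in
/-- Let k ≥ 3, H a connected simple graph on k vertices, G a finite simple graph
with maximum degree Δ. For every pair of distinct vertices u, v of G, the number of induced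
copies of H in G containing both u and v is at most (k−1)!·Δ^{k−2} − 1. -/
theorem copies_through_pair_le {V W : Type*} [Fintype V] [Fintype W] [DecidableEq V]
    (k : ℕ) (hk : 3 ≤ k) (H : SimpleGraph W) (hW : Fintype.card W = k) (hH : H.Connected)
    (G : SimpleGraph V) [DecidableRel G.Adj] (u v : V) (huv : u ≠ v) :
    copiesThrough G H u v ≤ (k - 1).factorial * G.maxDegree ^ (k - 2) - 1 := by
  classical
  unfold copiesThrough
  set CT := {S : Finset V // u ∈ S ∧ v ∈ S ∧ Nonempty (G.induce (↑S : Set V) ≃g H)} with hCT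
  rcases isEmpty_or_nonempty CT with he | hne
  · rw [Nat.card_of_isEmpty]; exact Nat.zero_le _
  -- neighbor embeddings
  have embE : ∀ w : V, Nonempty (↥(G.neighborSet w) ↪ Fin G.maxDegree) := fun w =>
    Function.Embedding.nonempty_of_card_le
      (by rw [G.card_neighborSet_eq_degree, Fintype.card_fin]; exact G.degree_le_maxDegree w)
  have embF : ∀ w : V, ↥(G.neighborSet w) ↪ Fin G.maxDegree := fun w => (embE w).some
  have embinj : ∀ (z z' a b : V) (_ : z = z') (ha : G.Adj z a) (hb : G.Adj z' b),
      embF z ⟨a, ha⟩ = embF z' ⟨b, hb⟩ → a = b := by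
    rintro z z' a b rfl ha hb h
    exact congrArg Subtype.val ((embF z).injective h)
  -- basic facts about copies
  have hfacts : ∀ c : CT, c.1.card = k ∧ (G.induce (↑c.1 : Set V)).Preconnected := by
    rintro ⟨S, hu', hv', ⟨iso⟩⟩
    constructor
    · have h := Nat.card_congr iso.toEquiv
      rwa [Nat.card_coe_set_eq, Set.ncard_coe_finset, Nat.card_eq_fintype_card, hW] at h
    · exact (iso.connected_iff.mpr hH).preconnected
  -- ordering sequences
  have key : ∀ c : CT, ∃ x : ℕ → V, x 0 = u ∧ x 1 = v ∧ (∀ i < k, x i ∈ c.1) ∧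
      (∀ i < k, ∀ j < k, x i = x j → i = j) ∧
      (∀ i, 2 ≤ i → i < k → ∃ j < i, G.Adj (x j) (x i)) := by
    intro c
    exact existsSeq G c.1 u v c.2.1 c.2.2.1 huv (hfacts c).2 k (by omega)
      (by rw [(hfacts c).1])
  choose x h0 h1 hmem hinj hadj using key
  -- parent function and code
  have pex : ∀ (c : CT) (i : Fin (k-2)), ∃ j, j < (i:ℕ)+2 ∧ G.Adj (x c j) (x c ((i:ℕ)+2)) :=
    fun c i => hadj c ((i:ℕ)+2) (by omega) (by have := i.2; omega)
  set parent : ∀ (c : CT), Fin (k-2) → ℕ := fun c i => Nat.find (pex c i) with hparent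
  have plt : ∀ c i, parent c i < (i:ℕ)+2 := fun c i => (Nat.find_spec (pex c i)).1
  have padj : ∀ c i, G.Adj (x c (parent c i)) (x c ((i:ℕ)+2)) :=
    fun c i => (Nat.find_spec (pex c i)).2
  set code : CT → (∀ i : Fin (k-2), Fin ((i:ℕ)+2) × Fin G.maxDegree) :=
    fun c i => (⟨parent c i, plt c i⟩, embF (x c (parent c i)) ⟨x c ((i:ℕ)+2), padj c i⟩)
    with hcode
  -- injectivity of code
  have codeinj : Function.Injective code := by
    intro c c' h
    have hxx : ∀ i, i < k → x c i = x c' i := by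
      intro i
      induction i using Nat.strong_induction_on with
      | _ i ih =>
        intro hik
        rcases Nat.lt_or_ge i 2 with hi2 | hi2
        · interval_cases i
          · rw [h0 c, h0 c']
          · rw [h1 c, h1 c']
        · set m : Fin (k-2) := ⟨i - 2, by omega⟩ with hm
          have hmv : ((m:ℕ)) + 2 = i := by simp [hm]; omega
          have hcomp := congrFun h m
          have hp : parent c m = parent c' m :=
            congrArg Fin.val (congrArg Prod.fst hcomp)
          have hz : x c (parent c m) = x c' (parent c' m) := by
            rw [← hp]
            exact ih (parent c m) (by have := plt c m; omega) (by have := plt c m; omega)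
          have h2c := congrArg Prod.snd hcomp
          have := embinj _ _ _ _ hz (padj c m) (padj c' m) h2c
          rwa [hmv] at this
    have himg : ∀ c : CT, c.1 = (Finset.range k).image (x c) := by
      intro c
      have hsub : (Finset.range k).image (x c) ⊆ c.1 := by
        intro a ha
        obtain ⟨i, hi, rfl⟩ := Finset.mem_image.mp ha
        exact hmem c i (Finset.mem_range.mp hi)
      have hicard : ((Finset.range k).image (x c)).card = k := by
        rw [Finset.card_image_of_injOn (fun i hi j hj hij =>
          hinj c i (Finset.mem_range.mp hi) j (Finset.mem_range.mp hj) hij),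
          Finset.card_range]
      exact (Finset.eq_of_subset_of_card_le hsub (by rw [hicard, (hfacts c).1])).symm
    apply Subtype.ext
    rw [himg c, himg c']
    apply Finset.image_congr
    intro i hi
    exact hxx i (Finset.mem_range.mp hi)
  -- positivity of maxDegree
  obtain ⟨c0⟩ := hne
  have hΔpos : 0 < G.maxDegree := (code c0 ⟨0, by omega⟩).2.pos
  -- unused code
  have hunused : ∃ co : (∀ i : Fin (k-2), Fin ((i:ℕ)+2) × Fin G.maxDegree),
      ∀ c : CT, code c ≠ co := by
    by_cases hadjuv : G.Adj u v
    · refine ⟨fun i => (⟨0, by omega⟩,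
        if (i:ℕ) = 0 then embF u ⟨v, hadjuv⟩ else ⟨0, hΔpos⟩), ?_⟩
      intro c hc
      have hcomp := congrFun hc ⟨0, by omega⟩
      have hp : parent c ⟨0, by omega⟩ = 0 :=
        congrArg Fin.val (congrArg Prod.fst hcomp)
      have hz : x c (parent c ⟨0, by omega⟩) = u := by rw [hp]; exact h0 c
      have h2c := congrArg Prod.snd hcomp
      simp only [if_pos rfl] at h2c
      have hv2 := embinj _ _ _ _ hz (padj c ⟨0, by omega⟩) hadjuv h2c
      have h1' : x c 1 = v := h1 c
      have : ((⟨0, by omega⟩ : Fin (k-2)) : ℕ) + 2 = 1 :=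
        hinj c _ (by simp; omega) 1 (by omega) (by rw [hv2, h1'])
      simp at this
    · by_cases hk4 : 4 ≤ k
      · refine ⟨fun i => (⟨0, by omega⟩, ⟨0, hΔpos⟩), ?_⟩
        intro c hc
        have hc0 := congrFun hc ⟨0, by omega⟩
        have hc1 := congrFun hc ⟨1, by omega⟩
        have hp0 : parent c ⟨0, by omega⟩ = 0 :=
          congrArg Fin.val (congrArg Prod.fst hc0)
        have hp1 : parent c ⟨1, by omega⟩ = 0 :=
          congrArg Fin.val (congrArg Prod.fst hc1)
        have hz : x c (parent c ⟨0, by omega⟩) = x c (parent c ⟨1, by omega⟩) := by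
          rw [hp0, hp1]
        have h2c := (congrArg Prod.snd hc0).trans (congrArg Prod.snd hc1).symm
        have heq := embinj _ _ _ _ hz (padj c ⟨0, by omega⟩) (padj c ⟨1, by omega⟩) h2c
        have : ((⟨0, by omega⟩ : Fin (k-2)) : ℕ) + 2 = ((⟨1, by omega⟩ : Fin (k-2)) : ℕ) + 2 :=
          hinj c _ (by simp; omega) _ (by simp; omega) heq
        simp at this
      · -- k = 3
        have hk3 : k = 3 := by omega
        refine ⟨fun i => (⟨1, by omega⟩, ⟨0, hΔpos⟩), ?_⟩
        intro c hc
        have hcomp := congrFun hc ⟨0, by omega⟩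
        have hp : parent c ⟨0, by omega⟩ = 1 :=
          congrArg Fin.val (congrArg Prod.fst hcomp)
        -- but in fact parent must be 0 since x c 2 is adjacent to u
        have hw2 : x c 2 ∈ c.1 := hmem c 2 (by omega)
        have hu' : u ∈ c.1 := c.2.1
        have hmemS : ∀ y ∈ c.1, ∃ i < k, x c i = y := by
          intro y hy
          have himg : c.1 ⊆ (Finset.range k).image (x c) := by
            intro a ha
            by_contra hcon
            have hsub : (Finset.range k).image (x c) ⊆ c.1.erase a := by
              intro b hb
              obtain ⟨i, hi, rfl⟩ := Finset.mem_image.mp hb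
              exact Finset.mem_erase.mpr ⟨fun hba => hcon (hba ▸ hb),
                hmem c i (Finset.mem_range.mp hi)⟩
            have h1' : ((Finset.range k).image (x c)).card = k := by
              rw [Finset.card_image_of_injOn (fun i hi j hj hij =>
                hinj c i (Finset.mem_range.mp hi) j (Finset.mem_range.mp hj) hij),
                Finset.card_range]
            have h2' := Finset.card_le_card hsub
            rw [h1', Finset.card_erase_of_mem ha, (hfacts c).1] at h2'
            omega
          obtain ⟨i, hi, hxy⟩ := Finset.mem_image.mp (himg hy)
          exact ⟨i, Finset.mem_range.mp hi, hxy⟩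
        have hadj2 : G.Adj u (x c 2) := by
          have hne2 : u ≠ x c 2 := by
            intro h
            have := hinj c 0 (by omega) 2 (by omega) (by rw [h0 c, h])
            omega
          obtain ⟨p⟩ := (hfacts c).2 ⟨u, Finset.mem_coe.mpr hu'⟩
            ⟨x c 2, Finset.mem_coe.mpr hw2⟩
          obtain ⟨y, hy⟩ := firstNeighbor _ p (fun h => hne2 (congrArg Subtype.val h))
          have hyS : (↑y : V) ∈ c.1 := Finset.mem_coe.mp y.2
          have hGAdj : G.Adj u ↑y := hy
          obtain ⟨i, hik, hxi⟩ := hmemS ↑y hyS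
          rw [hk3] at hik
          interval_cases i
          · rw [h0 c] at hxi; rw [← hxi] at hGAdj; exact absurd hGAdj (G.irrefl)
          · rw [h1 c] at hxi; rw [← hxi] at hGAdj; exact absurd hGAdj hadjuv
          · rwa [hxi]
        have hfind : parent c ⟨0, by omega⟩ = 0 := by
          rw [hparent]
          rw [Nat.find_eq_zero]
          exact ⟨by omega, by rw [h0 c]; exact hadj2⟩
        rw [hfind] at hp
        omega
  obtain ⟨co, hco⟩ := hunused
  -- counting
  have hfinal : Nat.card CT ≤
      Fintype.card (∀ i : Fin (k-2), Fin ((i:ℕ)+2) × Fin G.maxDegree) - 1 := by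
    have hinjf : Function.Injective
        (fun c : CT => (⟨code c, hco c⟩ :
          {y : (∀ i : Fin (k-2), Fin ((i:ℕ)+2) × Fin G.maxDegree) // y ≠ co})) := by
      intro a b hab
      exact codeinj (congrArg Subtype.val hab)
    calc Nat.card CT ≤ Nat.card {y : (∀ i : Fin (k-2), Fin ((i:ℕ)+2) × Fin G.maxDegree) // y ≠ co} :=
          Nat.card_le_card_of_injective _ hinjf
      _ = Fintype.card {y : (∀ i : Fin (k-2), Fin ((i:ℕ)+2) × Fin G.maxDegree) // y ≠ co} :=
          Nat.card_eq_fintype_card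
      _ = Fintype.card (∀ i : Fin (k-2), Fin ((i:ℕ)+2) × Fin G.maxDegree) - 1 := by
          rw [Fintype.card_subtype_compl, Fintype.card_subtype_eq]
  refine hfinal.trans ?_
  have hcardpi : Fintype.card (∀ i : Fin (k-2), Fin ((i:ℕ)+2) × Fin G.maxDegree) =
      (k - 1).factorial * G.maxDegree ^ (k - 2) := by
    rw [Fintype.card_pi]
    have : ∀ i : Fin (k-2), Fintype.card (Fin ((i:ℕ)+2) × Fin G.maxDegree) =
        ((i:ℕ)+2) * G.maxDegree := by
      intro i; rw [Fintype.card_prod, Fintype.card_fin, Fintype.card_fin]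
    rw [Finset.prod_congr rfl (fun i _ => this i), prodAux]
    congr 2
    omega
  rw [hcardpi]
end

section
/- Let (F_t)_{t≥0} be a filtration on a probability space and let (X_t)_{t≥1} be a sequence of {0,1}-valued random variables such that X_t is F_t-measurable for each t; write P_t = E[X_t | F_{t−1}]. Then for every ε ∈ (0,1) and every integer c̄ ≥ 1: P( ∃ t ≥ 1 such that Σ_{τ=1}^t X_τ ≥ c̄ and Σ_{τ=1}^t P_τ ≤ c̄·(1 − ε/(1+ε)) ) ≤ exp( −ε²·c̄ / (2(1+ε)²) ). -/
/-!
Write `S_t = ∑_{τ ≤ t} X_τ`, `Q_t = ∑_{τ ≤ t} P_τ` and `L = log (1 + ε)`. The process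
`M_t = exp (L S_t - ε Q_t)` is a nonnegative supermartingale with `M_0 = 1`: as `X_{t+1} ∈ {0, 1}`,
`exp (L X_{t+1}) = 1 + ε X_{t+1}`, whose conditional mean `1 + ε P_{t+1}` is at most
`exp (ε P_{t+1})`. On the event of the theorem `M_t ≥ K = exp (c L - ε c (1 - ε / (1 + ε)))` for
some `t`, so Ville's maximal inequality bounds its probability by `1 / K`, and
`-log (1 - x) ≥ x + x² / 2` at `x = ε / (1 + ε)` turns `1 / K` into the claimed bound.
-/

open MeasureTheory Finset Real

theorem neg_log_one_sub_ge {y : ℝ} (h0 : 0 ≤ y) (h1 : y < 1) : y + y ^ 2 / 2 ≤ -log (1 - y) := by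
  have hs := hasSum_pow_div_log_of_abs_lt_one (abs_lt.2 ⟨by linarith, h1⟩)
  have := sum_le_hasSum (range 2) (fun n _ => by positivity) hs
  norm_num [sum_range_succ] at this
  linarith

theorem sq_div_le_log_one_add_sub {ε : ℝ} (hε : 0 ≤ ε) :
    ε ^ 2 / (2 * (1 + ε) ^ 2) ≤ log (1 + ε) - ε * (1 - ε / (1 + ε)) := by
  have hy := neg_log_one_sub_ge (y := ε / (1 + ε)) (by positivity)
    ((div_lt_one (by positivity)).2 (by linarith))
  have h1 : 1 - ε / (1 + ε) = (1 + ε)⁻¹ := by field_simp; ring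
  rw [h1, log_inv, neg_neg] at hy
  have h2 : ε * (1 - ε / (1 + ε)) = ε / (1 + ε) := by field_simp; ring
  have h3 : ε ^ 2 / (2 * (1 + ε) ^ 2) = (ε / (1 + ε)) ^ 2 / 2 := by field_simp
  rw [h2, h3]
  linarith

namespace MeasureTheory.Supermartingale

variable {Ω : Type*} {m0 : MeasurableSpace Ω} {μ : Measure Ω} [IsFiniteMeasure μ]
  {ℱ : Filtration ℕ m0} {M : ℕ → Ω → ℝ}

theorem integral_stoppedValue_le_integral_zero (hM : Supermartingale M ℱ μ) {τ : Ω → ℕ∞}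
    (hτ : IsStoppingTime ℱ τ) {N : ℕ} (hbdd : ∀ ω, τ ω ≤ N) :
    ∫ ω, stoppedValue M τ ω ∂μ ≤ ∫ ω, M 0 ω ∂μ := by
  have := hM.neg.expected_stoppedValue_mono (isStoppingTime_const ℱ 0) hτ
    (fun _ => zero_le) hbdd
  simp only [stoppedValue_const] at this
  change ∫ ω, -M 0 ω ∂μ ≤ ∫ ω, -stoppedValue M τ ω ∂μ at this
  rw [integral_neg, integral_neg] at this
  linarith

theorem mul_measureReal_exists_ge_le_integral_zero (hM : Supermartingale M ℱ μ) (hM0 : 0 ≤ M)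
    (K : ℝ) (n : ℕ) :
    K * μ.real {ω | ∃ t ≤ n, K ≤ M t ω} ≤ ∫ ω, M 0 ω ∂μ := by
  set τ : Ω → ℕ∞ := fun ω => (hittingBtwn M (Set.Ici K) 0 n ω : ℕ)
  have hτ : IsStoppingTime ℱ τ :=
    hM.stronglyAdapted.adapted.isStoppingTime_hittingBtwn measurableSet_Ici
  have hτn : ∀ ω, τ ω ≤ n := fun ω => Nat.cast_le.2 (hittingBtwn_le ω)
  have hsub : {ω | ∃ t ≤ n, K ≤ M t ω} ⊆ {ω | K ≤ stoppedValue M τ ω} :=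
    fun ω ⟨t, htn, htK⟩ => stoppedValue_hittingBtwn_mem ⟨t, ⟨Nat.zero_le _, htn⟩, htK⟩
  by_cases hK : K ≤ 0
  · exact (mul_nonpos_of_nonpos_of_nonneg hK measureReal_nonneg).trans
      (integral_nonneg (hM0 0))
  calc K * μ.real {ω | ∃ t ≤ n, K ≤ M t ω}
      ≤ K * μ.real {ω | K ≤ stoppedValue M τ ω} := by
        gcongr; exacts [le_of_not_ge hK, measure_ne_top _ _]
    _ ≤ ∫ ω, stoppedValue M τ ω ∂μ :=
      mul_meas_ge_le_integral_of_nonneg (.of_forall fun ω => hM0 _ _)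
        (integrable_stoppedValue ℕ hτ hM.integrable hτn) K
    _ ≤ ∫ ω, M 0 ω ∂μ := hM.integral_stoppedValue_le_integral_zero hτ hτn

-- Ville's maximal inequality.
theorem measure_exists_ge_le_ofReal (hM : Supermartingale M ℱ μ) (hM0 : 0 ≤ M) {K : ℝ}
    (hK : 0 < K) :
    μ {ω | ∃ t, K ≤ M t ω} ≤ ENNReal.ofReal ((∫ ω, M 0 ω ∂μ) / K) := by
  have hunion : {ω | ∃ t, K ≤ M t ω} = ⋃ t, {ω | K ≤ M t ω} := by ext; simp
  rw [hunion, measure_iUnion_eq_iSup_accumulate]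
  refine iSup_le fun n => ?_
  have hacc : Set.accumulate (fun t => {ω | K ≤ M t ω}) n = {ω | ∃ t ≤ n, K ≤ M t ω} := by
    ext; simp [Set.mem_accumulate]
  rw [hacc, ← ofReal_measureReal (measure_ne_top _ _)]
  exact ENNReal.ofReal_le_ofReal
    ((le_div_iff₀' hK).2 (hM.mul_measureReal_exists_ge_le_integral_zero hM0 K n))

end MeasureTheory.Supermartingale

section

variable {Ω : Type*} {m0 : MeasurableSpace Ω} {μ : Measure Ω} {ℱ : Filtration ℕ m0}
  {X : ℕ → Ω → ℝ} {ε : ℝ}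

noncomputable def partialSum (X : ℕ → Ω → ℝ) (t : ℕ) (ω : Ω) : ℝ := ∑ τ ∈ Icc 1 t, X τ ω

noncomputable def compensator (μ : Measure Ω) (ℱ : Filtration ℕ m0) (X : ℕ → Ω → ℝ) (t : ℕ)
    (ω : Ω) : ℝ :=
  ∑ τ ∈ Icc 1 t, μ[X τ | ℱ (τ - 1)] ω

noncomputable def expDeviation (μ : Measure Ω) (ℱ : Filtration ℕ m0) (X : ℕ → Ω → ℝ) (ε : ℝ)
    (t : ℕ) (ω : Ω) : ℝ :=
  exp (log (1 + ε) * partialSum X t ω - ε * compensator μ ℱ X t ω)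

theorem stronglyAdapted_partialSum (hmeas : ∀ t, 1 ≤ t → StronglyMeasurable[ℱ t] (X t)) :
    StronglyAdapted ℱ (partialSum X) := fun _ =>
  Finset.stronglyMeasurable_fun_sum _ fun τ hτ =>
    (hmeas τ (mem_Icc.1 hτ).1).mono (ℱ.mono (mem_Icc.1 hτ).2)

theorem stronglyAdapted_compensator : StronglyAdapted ℱ (compensator μ ℱ X) := fun _ =>
  Finset.stronglyMeasurable_fun_sum _ fun τ hτ =>
    stronglyMeasurable_condExp.mono (ℱ.mono ((Nat.sub_le τ 1).trans (mem_Icc.1 hτ).2))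

theorem stronglyAdapted_expDeviation (hmeas : ∀ t, 1 ≤ t → StronglyMeasurable[ℱ t] (X t)) :
    StronglyAdapted ℱ (expDeviation μ ℱ X ε) := fun t =>
  continuous_exp.comp_stronglyMeasurable
    (((stronglyAdapted_partialSum hmeas t).const_mul _).sub
      ((stronglyAdapted_compensator t).const_mul ε))

theorem expDeviation_nonneg : 0 ≤ expDeviation μ ℱ X ε := fun _ _ => (exp_pos _).le

theorem expDeviation_zero : expDeviation μ ℱ X ε 0 = 1 := by
  ext; simp [expDeviation, partialSum, compensator]

theorem expDeviation_succ (hval : ∀ t, 1 ≤ t → ∀ ω, X t ω = 0 ∨ X t ω = 1) (hε : 0 < 1 + ε)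
    (t : ℕ) (ω : Ω) : expDeviation μ ℱ X ε (t + 1) ω =
      expDeviation μ ℱ X ε t ω * exp (-(ε * μ[X (t + 1) | ℱ t] ω)) * (1 + ε * X (t + 1) ω) := by
  have hX : exp (log (1 + ε) * X (t + 1) ω) = 1 + ε * X (t + 1) ω := by
    rcases hval (t + 1) (Nat.le_add_left 1 t) ω with h | h <;> simp [h, exp_log hε]
  simp only [expDeviation, partialSum, compensator, sum_Icc_succ_top (Nat.le_add_left 1 t),
    ← hX, ← exp_add]
  rw [Nat.add_sub_cancel]
  congr 1
  ring

section UnitInterval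

variable (hX : ∀ t, 1 ≤ t → ∀ ω, X t ω ∈ Set.Icc 0 1)
include hX

theorem partialSum_le (t : ℕ) (ω : Ω) : partialSum X t ω ≤ t :=
  calc partialSum X t ω ≤ ∑ τ ∈ Icc 1 t, (1 : ℝ) :=
        sum_le_sum fun τ hτ => (hX τ (mem_Icc.1 hτ).1 ω).2
    _ = t := by simp

theorem ae_compensator_nonneg (t : ℕ) : ∀ᵐ ω ∂μ, 0 ≤ compensator μ ℱ X t ω := by
  have : ∀ᵐ ω ∂μ, ∀ τ ∈ Icc 1 t, 0 ≤ μ[X τ | ℱ (τ - 1)] ω :=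
    (Filter.eventually_all_finset _).2 fun τ hτ =>
      condExp_nonneg (.of_forall fun ω => (hX τ (mem_Icc.1 hτ).1 ω).1)
  filter_upwards [this] with ω hω using sum_nonneg hω

theorem ae_expDeviation_le (hε : 0 ≤ ε) (t : ℕ) :
    ∀ᵐ ω ∂μ, expDeviation μ ℱ X ε t ω ≤ exp (log (1 + ε) * t) := by
  filter_upwards [ae_compensator_nonneg hX t] with ω hω
  have hL : 0 ≤ log (1 + ε) := log_nonneg (by linarith)
  have := partialSum_le hX t ω
  exact exp_le_exp.2 (by nlinarith)

theorem integrable_expDeviation [IsFiniteMeasure μ]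
    (hmeas : ∀ t, 1 ≤ t → StronglyMeasurable[ℱ t] (X t)) (hε : 0 ≤ ε) (t : ℕ) :
    Integrable (expDeviation μ ℱ X ε t) μ :=
  .of_bound ((stronglyAdapted_expDeviation hmeas t).mono (ℱ.le t)).aestronglyMeasurable _ <| by
    filter_upwards [ae_expDeviation_le (ℱ := ℱ) hX hε t] with ω hω
    rwa [norm_of_nonneg (expDeviation_nonneg t ω)]

end UnitInterval

theorem exp_neg_mul_one_add_le_one (a : ℝ) : exp (-a) * (1 + a) ≤ 1 :=
  calc exp (-a) * (1 + a) ≤ exp (-a) * exp a := by gcongr; linarith [add_one_le_exp a]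
    _ = 1 := by rw [← exp_add, neg_add_cancel, exp_zero]

theorem condExp_one_add_mul [IsFiniteMeasure μ] {m : MeasurableSpace Ω} (hm : m ≤ m0)
    {f : Ω → ℝ} (hf : Integrable f μ) (a : ℝ) :
    μ[fun ω => 1 + a * f ω | m] =ᵐ[μ] fun ω => 1 + a * μ[f | m] ω := by
  filter_upwards [condExp_add (m := m) (integrable_const (1 : ℝ)) (hf.smul a),
    condExp_smul (μ := μ) (m := m) a f] with ω hadd hsmul
  change μ[(fun _ => 1) + a • f | m] ω = _
  rw [hadd, Pi.add_apply, hsmul, condExp_const hm]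
  rfl

theorem supermartingale_expDeviation [IsFiniteMeasure μ]
    (hmeas : ∀ t, 1 ≤ t → StronglyMeasurable[ℱ t] (X t))
    (hval : ∀ t, 1 ≤ t → ∀ ω, X t ω = 0 ∨ X t ω = 1) (hε : 0 ≤ ε) :
    Supermartingale (expDeviation μ ℱ X ε) ℱ μ := by
  have hX : ∀ t, 1 ≤ t → ∀ ω, X t ω ∈ Set.Icc 0 1 := fun t ht ω => by
    rcases hval t ht ω with h | h <;> simp [h]
  refine supermartingale_nat (stronglyAdapted_expDeviation hmeas)
    (integrable_expDeviation hX hmeas hε) fun t => ?_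
  set M := expDeviation μ ℱ X ε
  set P := μ[X (t + 1) | ℱ t]
  set g : Ω → ℝ := fun ω => M t ω * exp (-(ε * P ω))
  set f : Ω → ℝ := fun ω => 1 + ε * X (t + 1) ω
  have hg : StronglyMeasurable[ℱ t] g :=
    (stronglyAdapted_expDeviation hmeas t).mul
      (continuous_exp.comp_stronglyMeasurable (stronglyMeasurable_condExp.const_mul ε).neg)
  have hXint : Integrable (X (t + 1)) μ :=
    .of_bound (((hmeas _ le_add_self).mono (ℱ.le _)).aestronglyMeasurable) 1
      (.of_forall fun ω => by
        rw [norm_of_nonneg (hX _ le_add_self ω).1]; exact (hX _ le_add_self ω).2)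
  have hsplit : M (t + 1) = g * f := funext (expDeviation_succ hval (by linarith) t)
  have hpull := condExp_mul_of_stronglyMeasurable_left (g := f) hg
    (hsplit ▸ integrable_expDeviation hX hmeas hε (t + 1))
    ((integrable_const 1).add (hXint.const_mul ε))
  filter_upwards [hpull, condExp_one_add_mul (ℱ.le t) hXint ε] with ω hω hP
  rw [hsplit, hω, Pi.mul_apply, hP]
  calc g ω * (1 + ε * P ω) = M t ω * (exp (-(ε * P ω)) * (1 + ε * P ω)) := mul_assoc _ _ _
    _ ≤ M t ω * 1 := by gcongr; exacts [expDeviation_nonneg t ω, exp_neg_mul_one_add_le_one _]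
    _ = M t ω := mul_one _

end

theorem adaptive_upper_deviation_bound_general {Ω : Type*} {m0 : MeasurableSpace Ω}
    (μ : Measure Ω) [IsProbabilityMeasure μ] (ℱ : Filtration ℕ m0)
    (X : ℕ → Ω → ℝ)
    (hmeas : ∀ t : ℕ, 1 ≤ t → StronglyMeasurable[ℱ t] (X t))
    (hval : ∀ t : ℕ, 1 ≤ t → ∀ ω : Ω, X t ω = 0 ∨ X t ω = 1)
    (ε : ℝ) (hε0 : 0 < ε) (c : ℕ) :
    (μ {ω : Ω | ∃ t : ℕ, 1 ≤ t ∧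
        (∑ τ ∈ Icc 1 t, X τ ω) ≥ (c : ℝ) ∧
        (∑ τ ∈ Icc 1 t, (μ[X τ | ℱ (τ - 1)]) ω) ≤ (c : ℝ) * (1 - ε / (1 + ε))}).toReal
      ≤ Real.exp (-(ε ^ 2 * (c : ℝ)) / (2 * (1 + ε) ^ 2)) := by
  set K := exp (log (1 + ε) * c - ε * (c * (1 - ε / (1 + ε))))
  have hville : μ {ω | ∃ t, K ≤ expDeviation μ ℱ X ε t ω} ≤ ENNReal.ofReal (1 / K) := by
    simpa [expDeviation_zero] using
      (supermartingale_expDeviation (μ := μ) hmeas hval hε0.le).measure_exists_ge_le_ofReal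
        expDeviation_nonneg (exp_pos _)
  calc _ ≤ (μ {ω | ∃ t, K ≤ expDeviation μ ℱ X ε t ω}).toReal := by
        refine ENNReal.toReal_mono (measure_ne_top _ _) (measure_mono ?_)
        rintro ω ⟨t, -, hS, hQ⟩
        have hL : 0 ≤ log (1 + ε) := log_nonneg (by linarith)
        refine ⟨t, exp_le_exp.2 ?_⟩
        unfold partialSum compensator
        gcongr
    _ ≤ 1 / K := ENNReal.toReal_le_of_le_ofReal (by positivity) hville
    _ ≤ _ := by
      rw [one_div, ← exp_neg, exp_le_exp]
      have := mul_le_mul_of_nonneg_left (sq_div_le_log_one_add_sub hε0.le) (Nat.cast_nonneg c)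
      linear_combination this

/-- Let (F_t) be a filtration and (X_t)_{t≥1} a sequence of {0,1}-valued random
variables with X_t F_t-measurable; write P_t = E[X_t | F_{t−1}]. For every ε ∈ (0,1) and
integer c̄ ≥ 1,
P(∃ t ≥ 1, Σ_{τ≤t} X_τ ≥ c̄ and Σ_{τ≤t} P_τ ≤ c̄(1 − ε/(1+ε))) ≤ exp(−ε²c̄/(2(1+ε)²)). -/
theorem adaptive_upper_deviation_bound {Ω : Type*} {m0 : MeasurableSpace Ω}
    (μ : Measure Ω) [IsProbabilityMeasure μ] (ℱ : Filtration ℕ m0)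
    (X : ℕ → Ω → ℝ)
    (hmeas : ∀ t : ℕ, 1 ≤ t → StronglyMeasurable[ℱ t] (X t))
    (hval : ∀ t : ℕ, 1 ≤ t → ∀ ω : Ω, X t ω = 0 ∨ X t ω = 1)
    (ε : ℝ) (hε0 : 0 < ε) (hε1 : ε < 1) (c : ℕ) (hc : 1 ≤ c) :
    (μ {ω : Ω | ∃ t : ℕ, 1 ≤ t ∧
        (∑ τ ∈ Icc 1 t, X τ ω) ≥ (c : ℝ) ∧
        (∑ τ ∈ Icc 1 t, (μ[X τ | ℱ (τ - 1)]) ω) ≤ (c : ℝ) * (1 - ε / (1 + ε))}).toReal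
      ≤ Real.exp (-(ε ^ 2 * (c : ℝ)) / (2 * (1 + ε) ^ 2)) :=
  adaptive_upper_deviation_bound_general μ ℱ X hmeas hval ε hε0 c
end

section
/- Let A = (a_{ij}) be an s × ς matrix with nonnegative real entries, and let c ∈ ℝ^s be a vector with nonnegative entries whose total weight C = Σ_{i=1}^s c_i is strictly positive. Suppose there exist z > 0 and a vector x ∈ ℕ^ς with Σ_{j=1}^ς x_j ≤ z and (Ax)_i ≥ c_i for every i ∈ {1,…,s}. Then there exists a column index j ∈ {1,…,ς} such that Σ_{i=1}^s min(a_{ij}, c_i) ≥ C/z. -/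
open Finset

/-- Let A be an s × ς matrix with nonnegative entries and c ∈ ℝ^s nonnegative
with total weight C = Σ c_i > 0. If there exist z > 0 and x ∈ ℕ^ς with Σ x_j ≤ z and
(Ax)_i ≥ c_i for all i, then some column j satisfies Σ_i min(a_{ij}, c_i) ≥ C/z. -/
theorem exists_good_column {s ς : ℕ} (a : Fin s → Fin ς → ℝ)
    (ha : ∀ i j, 0 ≤ a i j) (c : Fin s → ℝ) (hc : ∀ i, 0 ≤ c i)
    (hC : 0 < ∑ i, c i)
    (z : ℝ) (hz : 0 < z) (x : Fin ς → ℕ)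
    (hx : (∑ j, (x j : ℝ)) ≤ z)
    (hcov : ∀ i, c i ≤ ∑ j, a i j * (x j : ℝ)) :
    ∃ j : Fin ς, (∑ i, c i) / z ≤ ∑ i, min (a i j) (c i) := by
  by_contra h
  push_neg at h
  -- key: c i ≤ ∑ j, min (a i j) (c i) * x j
  have key : ∀ i, c i ≤ ∑ j, min (a i j) (c i) * (x j : ℝ) := by
    intro i
    by_cases hbig : ∃ j, 0 < x j ∧ c i ≤ a i j
    · obtain ⟨j0, hj0, haj⟩ := hbig
      have h1 : min (a i j0) (c i) * (x j0 : ℝ) = c i * (x j0 : ℝ) := by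
        rw [min_eq_right haj]
      calc c i = c i * 1 := by ring
        _ ≤ c i * (x j0 : ℝ) := by
            apply mul_le_mul_of_nonneg_left _ (hc i)
            exact_mod_cast hj0
        _ = min (a i j0) (c i) * (x j0 : ℝ) := h1.symm
        _ ≤ ∑ j, min (a i j) (c i) * (x j : ℝ) := by
            apply Finset.single_le_sum (f := fun j => min (a i j) (c i) * (x j : ℝ))
              (fun j _ => mul_nonneg (le_min (ha i j) (hc i)) (by positivity)) (mem_univ j0)
    · push_neg at hbig
      calc c i ≤ ∑ j, a i j * (x j : ℝ) := hcov i
        _ = ∑ j, min (a i j) (c i) * (x j : ℝ) := by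
            apply Finset.sum_congr rfl
            intro j _
            rcases Nat.eq_zero_or_pos (x j) with h0 | h0
            · simp [h0]
            · rw [min_eq_left (le_of_lt (hbig j h0))]
  set C := ∑ i, c i with hCdef
  have hS0 : 0 < ∑ j, (x j : ℝ) := by
    rcases (Finset.sum_nonneg (f := fun j => ((x j : ℝ))) (s := univ)
      (fun j _ => by positivity)).lt_or_eq with hlt | heq
    · exact hlt
    · exfalso
      have hall : ∀ j, x j = 0 := by
        intro j
        have := (Finset.sum_eq_zero_iff_of_nonneg (f := fun j => ((x j : ℝ)))
          (fun j _ => by positivity)).mp heq.symm j (mem_univ j)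
        exact_mod_cast this
      have : C ≤ 0 := by
        apply Finset.sum_nonpos
        intro i _
        calc c i ≤ ∑ j, a i j * (x j : ℝ) := hcov i
          _ = 0 := by simp [hall]
      linarith
  obtain ⟨j0, hj0⟩ : ∃ j0, 0 < x j0 := by
    by_contra hno
    push_neg at hno
    simp only [Nat.le_zero] at hno
    simp [hno] at hS0
  have hCz : 0 < C / z := div_pos hC hz
  have hmain : C ≤ ∑ j, (x j : ℝ) * (∑ i, min (a i j) (c i)) := by
    calc C ≤ ∑ i, ∑ j, min (a i j) (c i) * (x j : ℝ) := Finset.sum_le_sum (fun i _ => key i)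
      _ = ∑ j, (x j : ℝ) * (∑ i, min (a i j) (c i)) := by
          rw [Finset.sum_comm]
          apply Finset.sum_congr rfl
          intro j _
          rw [Finset.mul_sum]
          apply Finset.sum_congr rfl
          intro i _
          ring
  have hstrict : ∑ j, (x j : ℝ) * (∑ i, min (a i j) (c i)) < ∑ j, (x j : ℝ) * (C / z) := by
    apply Finset.sum_lt_sum
    · intro j _
      exact mul_le_mul_of_nonneg_left (le_of_lt (h j)) (by positivity)
    · exact ⟨j0, mem_univ j0, by
        apply mul_lt_mul_of_pos_left (h j0)
        exact_mod_cast hj0⟩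
  have hfin : ∑ j, (x j : ℝ) * (C / z) ≤ C := by
    rw [← Finset.sum_mul]
    calc (∑ j, (x j : ℝ)) * (C / z) ≤ z * (C / z) := by
          exact mul_le_mul_of_nonneg_right hx (le_of_lt hCz)
      _ = C := by field_simp
  linarith
end

section
/- Let A = (a_{ij}) be an s × ς matrix with nonnegative real entries, let c̄ > 0, and suppose the covering problem admits a feasible solution: there exists x* ∈ ℕ^ς with Σ_j x*_j = z for some integer z ≥ 1 and (Ax*)_i ≥ c̄ for all i ∈ {1,…,s} (with s ≥ 1). Consider the greedy procedure that starts from x⁰ = 0 and at each step t sets x^{t+1} = x^t + e_{j*}, where e_{j*} is the indicator vector of a column j* maximizing Σ_{i ∈ U_t} a_{ij} over j ∈ {1,…,ς}, with U_t = { i : c̄ − (Ax^t)_i > 0 } the set of not-yet-covered rows. Then after at most T = s + ⌈z·ln(2s)⌉ steps, the greedy solution satisfies (Ax^T)_i ≥ c̄/2 for every i ∈ {1,…,s}. -/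
open Finset

private def Scov {s ς : ℕ} (a : Fin s → Fin ς → ℝ) (x : ℕ → Fin ς → ℕ) (t : ℕ)
    (i : Fin s) : ℝ :=
  ∑ j, a i j * (x t j : ℝ)

private lemma core_decay (Φ : ℕ → ℝ) (u : ℕ → ℕ) (q C : ℝ)
    (hq0 : 0 ≤ q) (hq1 : q ≤ 1) (hC : 0 ≤ C)
    (hΦ0 : Φ 0 ≤ C)
    (hmono : ∀ t, Φ (t+1) ≤ Φ t)
    (humono : ∀ t, u (t+1) ≤ u t)
    (hgood : ∀ t, u (t+1) = u t → Φ (t+1) ≤ q * Φ t) :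
    ∀ t, Φ t ≤ C * q ^ (t - (u 0 - u t)) := by
  have hu0 : ∀ t, u t ≤ u 0 := by
    intro t; induction t with
    | zero => exact le_refl _
    | succ n ih => exact le_trans (humono n) ih
  intro t
  induction t with
  | zero => simpa using hΦ0
  | succ t ih =>
    rcases (humono t).lt_or_eq with h | h
    · calc Φ (t+1) ≤ Φ t := hmono t
        _ ≤ C * q ^ (t - (u 0 - u t)) := ih
        _ ≤ C * q ^ ((t+1) - (u 0 - u (t+1))) := by
            apply mul_le_mul_of_nonneg_left _ hC
            apply pow_le_pow_of_le_one hq0 hq1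
            have h1 := hu0 t
            have h2 := hu0 (t+1)
            omega
    · calc Φ (t+1) ≤ q * Φ t := hgood t h
        _ ≤ q * (C * q ^ (t - (u 0 - u t))) := mul_le_mul_of_nonneg_left ih hq0
        _ = C * q ^ ((t - (u 0 - u t)) + 1) := by ring
        _ ≤ C * q ^ ((t+1) - (u 0 - u (t+1))) := by
            apply mul_le_mul_of_nonneg_left _ hC
            apply pow_le_pow_of_le_one hq0 hq1
            omega

/-- Suppose the covering problem with an s × ς nonnegative matrix A and
threshold c̄ > 0 admits a feasible solution x* ∈ ℕ^ς of total size z ≥ 1, i.e. Σ_j x*_j = z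
and (Ax*)_i ≥ c̄ for all i. Consider the greedy procedure that starts from x⁰ = 0 and at each
step adds one unit to a column j* maximizing Σ_{i ∈ U_t} a_{ij}, where
U_t = {i : (Ax^t)_i < c̄} is the set of not-yet-covered rows. Then after
T = s + ⌈z·ln(2s)⌉ steps, the greedy solution satisfies (Ax^T)_i ≥ c̄/2 for every row i. -/
theorem greedy_cover_half {s ς : ℕ} (hs : 1 ≤ s)
    (a : Fin s → Fin ς → ℝ) (ha : ∀ i j, 0 ≤ a i j)
    (cbar : ℝ) (hcbar : 0 < cbar)
    (z : ℕ) (hz : 1 ≤ z) (xstar : Fin ς → ℕ)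
    (hxsum : ∑ j, xstar j = z)
    (hxcov : ∀ i, cbar ≤ ∑ j, a i j * (xstar j : ℝ))
    (x : ℕ → Fin ς → ℕ) (hx0 : x 0 = 0)
    (hstep : ∀ t : ℕ, ∃ jstar : Fin ς,
      (∀ j : Fin ς,
          (∑ i, if (∑ j', a i j' * (x t j' : ℝ)) < cbar then a i j else 0)
            ≤ (∑ i, if (∑ j', a i j' * (x t j' : ℝ)) < cbar then a i jstar else 0)) ∧
        x (t + 1) = fun j => x t j + (if j = jstar then 1 else 0)) :
    ∀ i : Fin s, cbar / 2 ≤ ∑ j, a i j * (x (s + ⌈(z : ℝ) * Real.log (2 * s)⌉₊) j : ℝ) := by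
  classical
  have hz' : (0:ℝ) < z := by exact_mod_cast hz
  have hs' : (0:ℝ) < s := by exact_mod_cast hs
  -- restated step hypothesis
  have hstep' : ∀ t : ℕ, ∃ jstar : Fin ς,
      (∀ j : Fin ς, (∑ i, if Scov a x t i < cbar then a i j else 0)
          ≤ (∑ i, if Scov a x t i < cbar then a i jstar else 0)) ∧
      ∀ i, Scov a x (t+1) i = Scov a x t i + a i jstar := by
    intro t
    obtain ⟨jstar, hmax, hxe⟩ := hstep t
    refine ⟨jstar, hmax, fun i => ?_⟩
    simp only [Scov, hxe]
    push_cast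
    simp [mul_add, Finset.sum_add_distrib, mul_ite, mul_one, mul_zero,
      Finset.sum_ite_eq']
  set Φ : ℕ → ℝ := fun t => ∑ i, max 0 (cbar - Scov a x t i) with hΦdef
  set u : ℕ → ℕ := fun t => (univ.filter (fun i => Scov a x t i < cbar)).card with hudef
  have hSnn : ∀ t i, 0 ≤ Scov a x t i := by
    intro t i
    exact Finset.sum_nonneg fun j _ => mul_nonneg (ha i j) (by positivity)
  have hSmono : ∀ t i, Scov a x t i ≤ Scov a x (t+1) i := by
    intro t i
    obtain ⟨jstar, _, hSe⟩ := hstep' t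
    rw [hSe i]
    linarith [ha i jstar]
  have hΦ0 : Φ 0 ≤ (s:ℝ) * cbar := by
    have h1 : Φ 0 = ∑ _i : Fin s, cbar := by
      apply Finset.sum_congr rfl
      intro i _
      simp [Scov, hx0, max_eq_right hcbar.le]
    rw [h1]
    simp [mul_comm]
  have hmono : ∀ t, Φ (t+1) ≤ Φ t := by
    intro t
    apply Finset.sum_le_sum
    intro i _
    exact max_le_max (le_refl 0) (by linarith [hSmono t i])
  have hUsub : ∀ t, (univ.filter (fun i => Scov a x (t+1) i < cbar))
      ⊆ (univ.filter (fun i => Scov a x t i < cbar)) := by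
    intro t i hi
    simp only [Finset.mem_filter, Finset.mem_univ, true_and] at hi ⊢
    linarith [hSmono t i]
  have humono : ∀ t, u (t+1) ≤ u t := fun t => Finset.card_le_card (hUsub t)
  have hq0 : (0:ℝ) ≤ 1 - (z:ℝ)⁻¹ := by
    have h1 : (1:ℝ) ≤ (z:ℝ) := by exact_mod_cast hz
    have h2 : (z:ℝ)⁻¹ ≤ 1⁻¹ := by gcongr
    rw [inv_one] at h2
    linarith
  have hq1 : (1 - (z:ℝ)⁻¹ : ℝ) ≤ 1 := by
    have : (0:ℝ) < (z:ℝ)⁻¹ := by positivity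
    linarith
  have hgood : ∀ t, u (t+1) = u t → Φ (t+1) ≤ (1 - (z:ℝ)⁻¹) * Φ t := by
    intro t hcard
    obtain ⟨jstar, hmax, hSe⟩ := hstep' t
    have hUeq : (univ.filter (fun i => Scov a x (t+1) i < cbar))
        = (univ.filter (fun i => Scov a x t i < cbar)) :=
      Finset.eq_of_subset_of_card_le (hUsub t) (le_of_eq hcard.symm)
    have hstay : ∀ i : Fin s, Scov a x t i < cbar → Scov a x (t+1) i < cbar := by
      intro i hi
      have : i ∈ (univ.filter (fun i => Scov a x t i < cbar)) := by
        simp [Finset.mem_filter, hi]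
      rw [← hUeq] at this
      simpa [Finset.mem_filter] using this
    set G : ℝ := ∑ i, if Scov a x t i < cbar then a i jstar else 0 with hGdef
    have hPhiStep : Φ (t+1) ≤ Φ t - G := by
      have hterm : ∀ i : Fin s, max 0 (cbar - Scov a x (t+1) i)
          ≤ max 0 (cbar - Scov a x t i) - (if Scov a x t i < cbar then a i jstar else 0) := by
        intro i
        by_cases hi : Scov a x t i < cbar
        · have h2 := hstay i hi
          rw [if_pos hi, max_eq_right (by linarith), max_eq_right (by linarith), hSe i]
          linarith
        · push_neg at hi
          have h3 := hSe i
          have h4 := ha i jstar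
          rw [if_neg (not_lt.mpr hi), max_eq_left (by linarith), max_eq_left (by linarith)]
          linarith
      calc Φ (t+1) ≤ ∑ i, (max 0 (cbar - Scov a x t i)
            - (if Scov a x t i < cbar then a i jstar else 0)) :=
            Finset.sum_le_sum fun i _ => hterm i
        _ = Φ t - G := by rw [Finset.sum_sub_distrib]
    have hPhiLB : Φ t ≤ (z:ℝ) * G := by
      have step1 : Φ t ≤ ∑ i, (if Scov a x t i < cbar
          then (∑ j, a i j * (xstar j : ℝ)) else 0) := by
        apply Finset.sum_le_sum
        intro i _
        by_cases hi : Scov a x t i < cbar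
        · rw [if_pos hi, max_eq_right (by linarith)]
          have := hxcov i
          have := hSnn t i
          linarith
        · push_neg at hi
          rw [if_neg (not_lt.mpr hi), max_eq_left (by linarith)]
      have step2 : (∑ i, (if Scov a x t i < cbar
            then (∑ j, a i j * (xstar j : ℝ)) else 0))
          = ∑ j, (∑ i, if Scov a x t i < cbar then a i j else 0) * (xstar j : ℝ) := by
        have e1 : (∑ i, (if Scov a x t i < cbar
              then (∑ j, a i j * (xstar j : ℝ)) else 0))
            = ∑ i, ∑ j, (if Scov a x t i < cbar then a i j else 0) * (xstar j : ℝ) := by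
          apply Finset.sum_congr rfl
          intro i _
          split <;> simp
        rw [e1, Finset.sum_comm]
        apply Finset.sum_congr rfl
        intro j _
        rw [Finset.sum_mul]
      have step3 : (∑ j, (∑ i, if Scov a x t i < cbar then a i j else 0) * (xstar j : ℝ))
          ≤ ∑ j, G * (xstar j : ℝ) := by
        apply Finset.sum_le_sum
        intro j _
        exact mul_le_mul_of_nonneg_right (hmax j) (by positivity)
      have step4 : (∑ j, G * (xstar j : ℝ)) = (z:ℝ) * G := by
        rw [← Finset.mul_sum]
        have : (∑ j, (xstar j : ℝ)) = (z:ℝ) := by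
          rw [← Nat.cast_sum, hxsum]
        rw [this, mul_comm]
      linarith [step1, step2 ▸ step1, step3, step4]
    have hGz : Φ t / (z:ℝ) ≤ G := by
      rw [div_le_iff₀ hz']
      linarith
    have hexp : (1 - (z:ℝ)⁻¹) * Φ t = Φ t - Φ t / (z:ℝ) := by
      field_simp
    rw [hexp]
    have : Φ t / (z:ℝ) ≤ G := hGz
    linarith
  have hcore := core_decay Φ u (1 - (z:ℝ)⁻¹) ((s:ℝ) * cbar) hq0 hq1
    (by positivity) hΦ0 hmono humono hgood
  set K := ⌈(z : ℝ) * Real.log (2 * (s:ℝ))⌉₊ with hKdef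
  have hmain := hcore (s + K)
  have hu0s : u 0 ≤ s := by
    have := Finset.card_filter_le (univ : Finset (Fin s)) (fun i => Scov a x 0 i < cbar)
    simpa [hudef] using this
  have hE : K ≤ (s + K) - (u 0 - u (s + K)) := by omega
  have h1 : Φ (s + K) ≤ (s:ℝ) * cbar * (1 - (z:ℝ)⁻¹) ^ K :=
    le_trans hmain (mul_le_mul_of_nonneg_left
      (pow_le_pow_of_le_one hq0 hq1 hE) (by positivity))
  have h2 : (1 - (z:ℝ)⁻¹ : ℝ) ≤ Real.exp (-(z:ℝ)⁻¹) := by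
    have := Real.add_one_le_exp (-(z:ℝ)⁻¹)
    linarith
  have h3 : (1 - (z:ℝ)⁻¹ : ℝ) ^ K ≤ Real.exp (-(z:ℝ)⁻¹) ^ K := pow_le_pow_left₀ hq0 h2 K
  have h4 : Real.exp (-(z:ℝ)⁻¹) ^ K = Real.exp (-((K:ℝ) * (z:ℝ)⁻¹)) := by
    rw [← Real.exp_nat_mul]
    ring_nf
  have h5 : Real.exp (-((K:ℝ) * (z:ℝ)⁻¹)) ≤ Real.exp (-Real.log (2 * (s:ℝ))) := by
    apply Real.exp_le_exp.mpr
    have hle : (z:ℝ) * Real.log (2 * (s:ℝ)) ≤ (K:ℝ) := Nat.le_ceil _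
    have hrw : Real.log (2 * (s:ℝ)) = ((z:ℝ) * Real.log (2 * (s:ℝ))) * (z:ℝ)⁻¹ := by
      field_simp
    rw [neg_le_neg_iff, hrw]
    exact mul_le_mul_of_nonneg_right hle (by positivity)
  have h6 : Real.exp (-Real.log (2 * (s:ℝ))) = (2 * (s:ℝ))⁻¹ := by
    rw [Real.exp_neg, Real.exp_log (by positivity)]
  have hΦT : Φ (s + K) ≤ cbar / 2 := by
    have hc : (s:ℝ) * cbar * (1 - (z:ℝ)⁻¹) ^ K ≤ (s:ℝ) * cbar * (2 * (s:ℝ))⁻¹ := by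
      apply mul_le_mul_of_nonneg_left _ (by positivity)
      calc (1 - (z:ℝ)⁻¹ : ℝ) ^ K ≤ Real.exp (-(z:ℝ)⁻¹) ^ K := h3
        _ = Real.exp (-((K:ℝ) * (z:ℝ)⁻¹)) := h4
        _ ≤ Real.exp (-Real.log (2 * (s:ℝ))) := h5
        _ = (2 * (s:ℝ))⁻¹ := h6
    have heq : (s:ℝ) * cbar * (2 * (s:ℝ))⁻¹ = cbar / 2 := by
      field_simp
    linarith
  intro i
  show cbar / 2 ≤ Scov a x (s + K) i
  by_cases hcov : cbar ≤ Scov a x (s + K) i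
  · linarith
  · push_neg at hcov
    have hterm : cbar - Scov a x (s + K) i ≤ Φ (s + K) := by
      have hsingle := Finset.single_le_sum
        (f := fun i => max 0 (cbar - Scov a x (s + K) i))
        (fun i _ => le_max_left _ _) (Finset.mem_univ i)
      calc cbar - Scov a x (s + K) i ≤ max 0 (cbar - Scov a x (s + K) i) := le_max_right _ _
        _ ≤ Φ (s + K) := hsingle
    linarith
end

section
/- Let k ≥ 4 and m ≥ 2 be integers, and let L be the (m, k−2)-lollipop graph. Then the number of induced copies of the path P_k on k vertices in L is exactly m − 1. -/
/-- The (m, p)-lollipop graph: a complete graph on m vertices (the `Sum.inl` vertices),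
a path t_1 − t_2 − ⋯ − t_p on p additional vertices (the `Sum.inr` vertices, in order),
and one extra edge joining the first clique vertex v_1 to the first path vertex t_1. -/
def lollipop (m p : ℕ) : SimpleGraph (Fin m ⊕ Fin p) :=
  SimpleGraph.fromRel fun x y =>
    match x, y with
    | Sum.inl a, Sum.inl b => a ≠ b
    | Sum.inr a, Sum.inr b => (a : ℕ) + 1 = (b : ℕ)
    | Sum.inl a, Sum.inr b => (a : ℕ) = 0 ∧ (b : ℕ) = 0
    | Sum.inr _, Sum.inl _ => False

namespace LollipopAux

open Sum SimpleGraph Finset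

variable {m p : ℕ}

lemma adj_inl_inl {a b : Fin m} :
    (lollipop m p).Adj (inl a) (inl b) ↔ a ≠ b := by
  simp only [lollipop, SimpleGraph.fromRel_adj, ne_eq, inl.injEq]
  tauto

lemma adj_inl_inr {a : Fin m} {y : Fin p} :
    (lollipop m p).Adj (inl a) (inr y) ↔ (a : ℕ) = 0 ∧ (y : ℕ) = 0 := by
  simp only [lollipop, SimpleGraph.fromRel_adj]
  constructor
  · rintro ⟨-, h | h⟩ <;> tauto
  · rintro ⟨h1, h2⟩; exact ⟨by simp, Or.inl ⟨h1, h2⟩⟩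

lemma adj_inr_inl {a : Fin m} {y : Fin p} :
    (lollipop m p).Adj (inr y) (inl a) ↔ (a : ℕ) = 0 ∧ (y : ℕ) = 0 := by
  rw [SimpleGraph.adj_comm]; exact adj_inl_inr

lemma adj_inr_inr {x y : Fin p} :
    (lollipop m p).Adj (inr x) (inr y) ↔ (x : ℕ) + 1 = (y : ℕ) ∨ (y : ℕ) + 1 = (x : ℕ) := by
  simp only [lollipop, SimpleGraph.fromRel_adj, ne_eq, inr.injEq]
  constructor
  · rintro ⟨-, h⟩; exact h
  · rintro (h | h) <;> exact ⟨by rintro rfl; omega, by tauto⟩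

/-- The canonical induced-path vertex set: two clique vertices `z`, `b` plus all path verts. -/
def lolSet (m p : ℕ) (z b : Fin m) : Finset (Fin m ⊕ Fin p) :=
  insert (inl z) (insert (inl b) (Finset.univ.map ⟨inr, inr_injective⟩))

lemma mem_lolSet_inl {z b x : Fin m} :
    (inl x : Fin m ⊕ Fin p) ∈ lolSet m p z b ↔ x = z ∨ x = b := by
  simp [lolSet]

lemma mem_lolSet_inr {z b : Fin m} {y : Fin p} :
    (inr y : Fin m ⊕ Fin p) ∈ lolSet m p z b := by
  simp [lolSet]

/-- Position of a vertex of the lolSet inside the path `P_{p+2}`. -/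
def val2 : Fin m ⊕ Fin p → ℕ
  | inl a => if (a : ℕ) = 0 then 1 else 0
  | inr y => (y : ℕ) + 2

lemma adj_iff_val2 {z b : Fin m} (hz : (z : ℕ) = 0) (hb : (b : ℕ) ≠ 0)
    {x y : Fin m ⊕ Fin p} (hx : x ∈ lolSet m p z b) (hy : y ∈ lolSet m p z b) :
    (lollipop m p).Adj x y ↔ (val2 x + 1 = val2 y ∨ val2 y + 1 = val2 x) := by
  rcases x with a1 | y1 <;> rcases y with a2 | y2
  · rw [adj_inl_inl]
    rw [mem_lolSet_inl] at hx hy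
    have h1 : (a1 : ℕ) = 0 ∨ (a1 : ℕ) = b := by rcases hx with rfl | rfl <;> simp [hz]
    have h2 : (a2 : ℕ) = 0 ∨ (a2 : ℕ) = b := by rcases hy with rfl | rfl <;> simp [hz]
    have hne : a1 ≠ a2 ↔ (a1 : ℕ) ≠ (a2 : ℕ) := by simp [Fin.ext_iff]
    rw [hne]
    simp only [val2]
    rcases h1 with h1 | h1 <;> rcases h2 with h2 | h2 <;>
      simp only [h1, h2, if_pos, if_neg hb, true_or, or_true, iff_true] <;> omega
  · rw [adj_inl_inr]
    rw [mem_lolSet_inl] at hx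
    have h1 : (a1 : ℕ) = 0 ∨ (a1 : ℕ) = b := by rcases hx with rfl | rfl <;> simp [hz]
    simp only [val2]
    rcases h1 with h1 | h1
    · rw [if_pos h1]; omega
    · rw [if_neg (h1 ▸ hb)]; omega
  · rw [adj_inr_inl]
    rw [mem_lolSet_inl] at hy
    have h2 : (a2 : ℕ) = 0 ∨ (a2 : ℕ) = b := by rcases hy with rfl | rfl <;> simp [hz]
    simp only [val2]
    rcases h2 with h2 | h2
    · rw [if_pos h2]; omega
    · rw [if_neg (h2 ▸ hb)]; omega
  · rw [adj_inr_inr]; simp only [val2]; omega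

lemma val2_lt {z b : Fin m} {x : Fin m ⊕ Fin p} (hx : x ∈ lolSet m p z b) :
    val2 x < p + 2 := by
  rcases x with a | y
  · rcases mem_lolSet_inl.mp hx with rfl | rfl <;> simp only [val2] <;> split <;> omega
  · simp only [val2]; have := y.isLt; omega

/-- The canonical set induces a path graph. -/
noncomputable def pathIso (z b : Fin m) (hz : (z : ℕ) = 0) (hb : (b : ℕ) ≠ 0) :
    (lollipop m p).induce (↑(lolSet m p z b) : Set (Fin m ⊕ Fin p)) ≃g
      SimpleGraph.pathGraph (p + 2) where
  toEquiv := Equiv.ofBijective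
    (fun s => (⟨val2 s.1, val2_lt s.2⟩ : Fin (p + 2)))
    (by
      constructor
      · rintro ⟨x, hx⟩ ⟨y, hy⟩ h
        rw [Finset.mem_coe] at hx hy
        apply Subtype.ext
        have hval : val2 x = val2 y := congrArg Fin.val h
        rcases x with a1 | y1 <;> rcases y with a2 | y2
        · rcases mem_lolSet_inl.mp hx with rfl | rfl <;>
            rcases mem_lolSet_inl.mp hy with rfl | rfl <;>
            first
              | rfl
              | (exfalso; simp [val2, hz, hb] at hval)
        · exfalso
          simp only [val2] at hval
          split_ifs at hval <;> omega
        · exfalso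
          simp only [val2] at hval
          split_ifs at hval <;> omega
        · simp only [val2] at hval
          exact congrArg Sum.inr (Fin.ext (by omega))
      · intro i
        by_cases h0 : (i : ℕ) = 0
        · refine ⟨⟨inl b, by simp [mem_lolSet_inl]⟩, ?_⟩
          apply Fin.ext
          simp only [val2, if_neg hb]
          omega
        · by_cases h1 : (i : ℕ) = 1
          · refine ⟨⟨inl z, by simp [mem_lolSet_inl]⟩, ?_⟩
            apply Fin.ext
            simp only [val2, if_pos hz]
            omega
          · refine ⟨⟨inr ⟨(i : ℕ) - 2, by have := i.isLt; omega⟩,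
              by simp [mem_lolSet_inr]⟩, ?_⟩
            apply Fin.ext
            simp only [val2]
            have := i.isLt
            omega)
  map_rel_iff' := by
    rintro ⟨x, hx⟩ ⟨y, hy⟩
    rw [Finset.mem_coe] at hx hy
    simp only [Equiv.ofBijective_apply, SimpleGraph.pathGraph_adj,
      SimpleGraph.comap_adj, Function.Embedding.coe_subtype]
    exact (adj_iff_val2 hz hb hx hy).symm

/-- Classification: any induced copy of `P_{p+2}` is a `lolSet`. -/
lemma classify {z : Fin m} (hz : (z : ℕ) = 0) (hp : 2 ≤ p)
    (S : Finset (Fin m ⊕ Fin p))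
    (e : (lollipop m p).induce (↑S : Set (Fin m ⊕ Fin p)) ≃g
      SimpleGraph.pathGraph (p + 2)) :
    ∃ b : Fin m, (b : ℕ) ≠ 0 ∧ S = lolSet m p z b := by
  -- cardinality of S
  have hcard : S.card = p + 2 := by
    have := Nat.card_congr e.toEquiv
    rwa [Nat.card_coe_set_eq, Set.ncard_coe_finset, Nat.card_eq_fintype_card,
      Fintype.card_fin] at this
  -- no triangles
  have htri : S.toLeft.card ≤ 2 := by
    by_contra h
    push_neg at h
    obtain ⟨a, ha, b, hb, c, hc, hab, hac, hbc⟩ := Finset.two_lt_card.mp h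
    rw [Finset.mem_toLeft] at ha hb hc
    set u : ↥(↑S : Set (Fin m ⊕ Fin p)) := ⟨inl a, ha⟩
    set v : ↥(↑S : Set (Fin m ⊕ Fin p)) := ⟨inl b, hb⟩
    set w : ↥(↑S : Set (Fin m ⊕ Fin p)) := ⟨inl c, hc⟩
    have adjuv : ((lollipop m p).induce _).Adj u v := by
      simp only [SimpleGraph.comap_adj, Function.Embedding.coe_subtype]
      exact adj_inl_inl.mpr hab
    have adjuw : ((lollipop m p).induce _).Adj u w := by
      simp only [SimpleGraph.comap_adj, Function.Embedding.coe_subtype]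
      exact adj_inl_inl.mpr hac
    have adjvw : ((lollipop m p).induce _).Adj v w := by
      simp only [SimpleGraph.comap_adj, Function.Embedding.coe_subtype]
      exact adj_inl_inl.mpr hbc
    have h1 := SimpleGraph.pathGraph_adj.mp (e.map_adj_iff.mpr adjuv)
    have h2 := SimpleGraph.pathGraph_adj.mp (e.map_adj_iff.mpr adjuw)
    have h3 := SimpleGraph.pathGraph_adj.mp (e.map_adj_iff.mpr adjvw)
    omega
  have hright : S.toRight.card ≤ p := by
    simpa using Finset.card_le_univ S.toRight
  have hsum : S.toLeft.card + S.toRight.card = S.card := Finset.card_toLeft_add_card_toRight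
  have hL2 : S.toLeft.card = 2 := by omega
  have hRp : S.toRight.card = p := by omega
  have hRuniv : S.toRight = Finset.univ :=
    Finset.eq_univ_of_card _ (by simp [hRp])
  obtain ⟨a, c, hac, hpair⟩ := Finset.card_eq_two.mp hL2
  -- an edge of the induced graph never joins inl-side to inr-side unless the inl vertex is v₁
  -- connectivity forces one of a, c to be z
  have hzin : a = z ∨ c = z := by
    by_contra hcon
    push_neg at hcon
    obtain ⟨haz, hcz⟩ := hcon
    have hane : (a : ℕ) ≠ 0 := fun h => haz (Fin.ext (h.trans hz.symm))
    have hcne : (c : ℕ) ≠ 0 := fun h => hcz (Fin.ext (h.trans hz.symm))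
    have key : ∀ u v : ↥(↑S : Set (Fin m ⊕ Fin p)),
        ((lollipop m p).induce _).Adj u v → u.1.isLeft = v.1.isLeft := by
      rintro ⟨x, hx⟩ ⟨y, hy⟩ hadj
      simp only [SimpleGraph.comap_adj, Function.Embedding.coe_subtype] at hadj
      rcases x with a1 | y1 <;> rcases y with a2 | y2 <;> simp only [isLeft]
      · exfalso
        have h0 := (adj_inl_inr.mp hadj).1
        have := Finset.mem_toLeft.mpr (hx : (inl a1 : Fin m ⊕ Fin p) ∈ S)
        rw [hpair] at this
        rcases Finset.mem_insert.mp this with rfl | h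
        · exact hane h0
        · rw [Finset.mem_singleton] at h; subst h; exact hcne h0
      · exfalso
        have h0 := (adj_inr_inl.mp hadj).1
        have := Finset.mem_toLeft.mpr (hy : (inl a2 : Fin m ⊕ Fin p) ∈ S)
        rw [hpair] at this
        rcases Finset.mem_insert.mp this with rfl | h
        · exact hane h0
        · rw [Finset.mem_singleton] at h; subst h; exact hcne h0
    have hconn : ((lollipop m p).induce (↑S : Set (Fin m ⊕ Fin p))).Connected := by
      rw [SimpleGraph.Iso.connected_iff e]
      exact SimpleGraph.pathGraph_connected (p + 1)
    have hamem : (inl a : Fin m ⊕ Fin p) ∈ S := by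
      rw [← Finset.mem_toLeft, hpair]; simp
    have hrmem : (inr ⟨0, by omega⟩ : Fin m ⊕ Fin p) ∈ S := by
      rw [← Finset.mem_toRight]
      simp [hRuniv]
    obtain ⟨w⟩ := hconn.preconnected ⟨inl a, hamem⟩ ⟨inr ⟨0, by omega⟩, hrmem⟩
    have : ∀ {u v : ↥(↑S : Set (Fin m ⊕ Fin p))}
        (w : ((lollipop m p).induce _).Walk u v), u.1.isLeft = v.1.isLeft := by
      intro u v w
      induction w with
      | nil => rfl
      | cons h w ih => exact (key _ _ h).trans ih
    simpa using this w
  -- conclude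
  have main : ∀ a c : Fin m, a ≠ c → S.toLeft = {a, c} → a = z →
      ∃ b : Fin m, (b : ℕ) ≠ 0 ∧ S = lolSet m p z b := by
    intro a c hac hpair haz
    refine ⟨c, ?_, ?_⟩
    · intro h
      exact hac (Fin.ext (by rw [haz, hz, h]))
    · ext x
      rcases x with a1 | y1
      · rw [mem_lolSet_inl, ← Finset.mem_toLeft, hpair, ← haz]
        simp [Finset.mem_insert]
      · rw [← Finset.mem_toRight, hRuniv]
        simp [mem_lolSet_inr]
  rcases hzin with rfl | rfl
  · exact main a c hac hpair rfl
  · exact main c a hac.symm (by rw [hpair]; exact Finset.pair_comm a c) rfl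

end LollipopAux

/-- For integers k ≥ 4 and m ≥ 2, the number of induced copies of the path P_k
on k vertices in the (m, k−2)-lollipop graph is exactly m − 1. -/
theorem lollipop_induced_path_count (m k : ℕ) (hk : 4 ≤ k) (hm : 2 ≤ m) :
    Nat.card {S : Finset (Fin m ⊕ Fin (k - 2)) //
        Nonempty ((lollipop m (k - 2)).induce (↑S : Set (Fin m ⊕ Fin (k - 2)))
          ≃g SimpleGraph.pathGraph k)}
      = m - 1 := by
  open LollipopAux in
  obtain ⟨p, rfl⟩ : ∃ p, k = p + 2 := ⟨k - 2, by omega⟩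
  have hp : 2 ≤ p := by omega
  have hm0 : 0 < m := by omega
  set z : Fin m := ⟨0, hm0⟩ with hzdef
  have hz : (z : ℕ) = 0 := rfl
  have hcast : p + 2 - 2 = p := by omega
  let f : {b : Fin m // (b : ℕ) ≠ 0} →
      {S : Finset (Fin m ⊕ Fin (p + 2 - 2)) //
        Nonempty ((lollipop m (p + 2 - 2)).induce (↑S : Set (Fin m ⊕ Fin (p + 2 - 2)))
          ≃g SimpleGraph.pathGraph (p + 2))} :=
    fun b => ⟨lolSet m p z b.1, ⟨pathIso z b.1 hz b.2⟩⟩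
  have hbij : Function.Bijective f := by
    constructor
    · rintro ⟨b1, hb1⟩ ⟨b2, hb2⟩ h
      have : (lolSet m p z b1 : Finset (Fin m ⊕ Fin p)) = lolSet m p z b2 :=
        congrArg Subtype.val h
      have hmem : (Sum.inl b1 : Fin m ⊕ Fin p) ∈ lolSet m p z b2 := by
        rw [← this, mem_lolSet_inl]; right; rfl
      rw [mem_lolSet_inl] at hmem
      rcases hmem with rfl | rfl
      · exact absurd hz hb1
      · rfl
    · rintro ⟨S, ⟨e⟩⟩
      obtain ⟨b, hb, rfl⟩ := classify hz hp S e
      exact ⟨⟨b, hb⟩, rfl⟩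
  rw [← Nat.card_eq_of_bijective f hbij, Nat.card_eq_fintype_card,
    Fintype.card_subtype_compl]
  congr 1
  · exact Fintype.card_fin m
  · rw [Fintype.card_eq_one_iff_nonempty_unique]
    exact ⟨⟨⟨z, hz⟩, fun b => Subtype.ext (Fin.ext (b.2.trans hz.symm))⟩⟩
end

section
/- Let k ≥ 4 and m ≥ k be integers, and let L be the (m, k−2)-lollipop graph. Then the number of induced copies of the path P_k in L is m − 1, while the number of (not necessarily induced) path subgraphs of L on k vertices is at least m!/(2·(m−k)!). Consequently, the fraction of k-vertex path subgraphs of L whose vertex set induces a copy of P_k is at most 2·(m−1)·(m−k)!/m!. -/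
namespace SimpleGraph

variable {α β γ : Type*}

theorem natCard_copy_le_mul_natCard_aut [Finite α] [Finite β]
    (A : SimpleGraph α) (B : SimpleGraph β) :
    Nat.card (Copy A B) ≤
      Nat.card {H : B.Subgraph // Nonempty (H.coe ≃g A)} * Nat.card (A ≃g A) := by
  have := DFunLike.finite (A ≃g A)
  let e (H : {H : B.Subgraph // Nonempty (H.coe ≃g A)}) : H.1.coe ≃g A := H.2.some
  let image (f : Copy A B) : {H : B.Subgraph // Nonempty (H.coe ≃g A)} :=
    ⟨f.toSubgraph, ⟨f.isoToSubgraph.symm⟩⟩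
  -- a copy is recovered from its image and the automorphism relating it to the chosen iso
  let recover (p : {H : B.Subgraph // Nonempty (H.coe ≃g A)} × (A ≃g A)) (a : α) : β :=
    ((e p.1).symm (p.2 a) : β)
  have hrecover (f : Copy A B) : recover (image f, e (image f) |>.comp f.isoToSubgraph) = f := by
    ext a
    simp only [RelIso.trans_apply, RelIso.symm_apply_apply, recover]
    rfl
  rw [← Nat.card_prod]
  refine Nat.card_le_card_of_injective (fun f => (image f, (e (image f)).comp f.isoToSubgraph)) ?_
  intro f g hfg
  exact DFunLike.coe_injective ((hrecover f).symm.trans ((congrArg recover hfg).trans (hrecover g)))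

theorem natCard_embedding_le_natCard_copy [Finite α] [Finite β] (A : SimpleGraph α)
    {B : SimpleGraph β} (c : Copy (⊤ : SimpleGraph γ) B) :
    Nat.card (α ↪ γ) ≤ Nat.card (Copy A B) := by
  have := DFunLike.finite (Copy A B)
  refine Nat.card_le_card_of_injective
    (fun f => c.comp ((Embedding.completeGraph f).toCopy.comp (Copy.ofLE A ⊤ le_top))) ?_
  intro f g hfg
  ext a
  exact c.injective (DFunLike.congr_fun hfg a)

theorem Copy.pathGraph_strictMono_or_strictAnti {k l : ℕ}
    (f : Copy (pathGraph (k + 1)) (pathGraph l)) : StrictMono f ∨ StrictAnti f := by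
  have step (i : Fin k) :
      (f i.succ : ℤ) - f i.castSucc = 1 ∨ (f i.succ : ℤ) - f i.castSucc = -1 := by
    have hadj : (pathGraph l).Adj (f i.castSucc) (f i.succ) :=
      f.toHom.map_adj (pathGraph_adj.mpr (Or.inl (by simp)))
    have := pathGraph_adj.mp hadj
    omega
  -- `f` is injective, so consecutive steps cannot cancel
  have same (i : ℕ) (hi : i + 1 < k) :
      (f (Fin.succ ⟨i + 1, hi⟩) : ℤ) - f (Fin.castSucc ⟨i + 1, hi⟩) =
        f (Fin.succ ⟨i, by omega⟩) - f (Fin.castSucc ⟨i, by omega⟩) := by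
    have hne : f (Fin.succ ⟨i + 1, hi⟩) ≠ f (Fin.castSucc ⟨i, by omega⟩) :=
      fun h => absurd (f.injective h) (by simp [Fin.ext_iff]; omega)
    have hne' := Fin.val_ne_of_ne hne
    have h₁ := step ⟨i + 1, hi⟩
    have h₂ := step ⟨i, by omega⟩
    have hmid : f (Fin.castSucc ⟨i + 1, hi⟩) = f (Fin.succ ⟨i, by omega⟩) := rfl
    omega
  have const (i : ℕ) (hi : i < k) :
      (f (Fin.succ ⟨i, hi⟩) : ℤ) - f (Fin.castSucc ⟨i, hi⟩) =
        f (Fin.succ ⟨0, by omega⟩) - f (Fin.castSucc ⟨0, by omega⟩) := by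
    induction i with
    | zero => rfl
    | succ i ih => exact (same i hi).trans (ih (by omega))
  rcases Nat.eq_zero_or_pos k with rfl | hk
  · exact Or.inl fun i j hij => absurd hij (by omega)
  rcases step ⟨0, hk⟩ with h | h
  · refine Or.inl (Fin.strictMono_iff_lt_succ.mpr fun i => ?_)
    have := const i i.2
    simp only [Fin.eta] at this
    omega
  · refine Or.inr (Fin.strictAnti_iff_succ_lt.mpr fun i => ?_)
    have := const i i.2
    simp only [Fin.eta] at this
    omega

theorem natCard_aut_pathGraph_le_two (k : ℕ) :
    Nat.card (pathGraph (k + 1) ≃g pathGraph (k + 1)) ≤ 2 := by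
  classical
  have hinj : Function.Injective fun σ : pathGraph (k + 1) ≃g pathGraph (k + 1) =>
      decide (StrictMono σ) := by
    intro σ τ h
    have hrange : Set.range σ = Set.range τ := by
      rw [σ.surjective.range_eq, τ.surjective.range_eq]
    refine DFunLike.coe_injective ?_
    by_cases hσ : StrictMono σ <;> by_cases hτ : StrictMono τ <;>
      simp only [hσ, hτ, decide_true, decide_false, Bool.true_eq_false, Bool.false_eq_true] at h
    · exact (hσ.range_inj hτ).mp hrange
    · exact ((σ.toCopy.pathGraph_strictMono_or_strictAnti.resolve_left hσ).range_inj
        (τ.toCopy.pathGraph_strictMono_or_strictAnti.resolve_left hτ)).mp hrange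
  simpa using Nat.card_le_card_of_injective _ hinj

theorem Subgraph.isInduced_of_iso_induce [Finite α] {G : SimpleGraph α} {H : G.Subgraph}
    (e : H.coe ≃g G.induce H.verts) : H.IsInduced := by
  have hle : H.coe ≤ G.induce H.verts := fun _ _ huv => H.adj_sub huv
  have heq : H.coe = G.induce H.verts := edgeSet_inj.mp <|
    Set.eq_of_subset_of_ncard_le (SimpleGraph.edgeSet_mono hle)
      (by rw [← Nat.card_coe_set_eq, ← Nat.card_coe_set_eq]
          exact (Nat.card_congr e.mapEdgeSet).ge)
      (Set.toFinite _)
  intro v hv w hw hvw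
  have hadj : (G.induce H.verts).Adj ⟨v, hv⟩ ⟨w, hw⟩ := hvw
  exact (heq ▸ hadj : H.coe.Adj ⟨v, hv⟩ ⟨w, hw⟩)

theorem natCard_inducedSubgraph_le_natCard_finset [Finite α] (G : SimpleGraph α)
    (P : SimpleGraph β) :
    Nat.card {H : G.Subgraph // Nonempty (H.coe ≃g P) ∧ Nonempty (G.induce H.verts ≃g P)} ≤
      Nat.card {S : Finset α // Nonempty (G.induce (S : Set α) ≃g P)} := by
  classical
  have := Fintype.ofFinite α
  refine Nat.card_le_card_of_injective
    (fun H => ⟨H.1.verts.toFinset, by rw [Set.coe_toFinset]; exact H.2.2⟩) ?_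
  rintro ⟨H₁, ⟨e₁⟩, ⟨f₁⟩⟩ ⟨H₂, ⟨e₂⟩, ⟨f₂⟩⟩ h
  have hverts : H₁.verts = H₂.verts := by simpa using congrArg Subtype.val h
  have h₁ := (Subgraph.isInduced_of_iso_induce (f₁.symm.comp e₁)).induce_top_verts
  have h₂ := (Subgraph.isInduced_of_iso_induce (f₂.symm.comp e₂)).induce_top_verts
  exact Subtype.ext (h₁.symm.trans ((congrArg _ hverts).trans h₂))

end SimpleGraph

open SimpleGraph Finset

variable {m n : ℕ}

@[simp] lemma lollipop_adj_inl_inl {a b : Fin m} :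
    (lollipop m n).Adj (.inl a) (.inl b) ↔ a ≠ b := by
  simp [lollipop, fromRel_adj]; tauto

@[simp] lemma lollipop_adj_inl_inr {a : Fin m} {b : Fin n} :
    (lollipop m n).Adj (.inl a) (.inr b) ↔ (a : ℕ) = 0 ∧ (b : ℕ) = 0 := by
  simp [lollipop, fromRel_adj]

@[simp] lemma lollipop_adj_inr_inl {a : Fin m} {b : Fin n} :
    (lollipop m n).Adj (.inr b) (.inl a) ↔ (a : ℕ) = 0 ∧ (b : ℕ) = 0 := by
  rw [adj_comm, lollipop_adj_inl_inr]

@[simp] lemma lollipop_adj_inr_inr {a b : Fin n} :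
    (lollipop m n).Adj (.inr a) (.inr b) ↔ (a : ℕ) + 1 = b ∨ (b : ℕ) + 1 = a := by
  simp only [lollipop, fromRel_adj, ne_eq, Sum.inr.injEq, and_iff_right_iff_imp]
  omega

lemma card_toLeft_le_two_of_iso_pathGraph {k : ℕ} {S : Finset (Fin m ⊕ Fin n)}
    (e : (lollipop m n).induce (S : Set (Fin m ⊕ Fin n)) ≃g pathGraph k) : #S.toLeft ≤ 2 := by
  -- three clique vertices of `S` would span a triangle in `P_k`
  by_contra! h
  obtain ⟨a, ha, b, hb, c, hc, hab, hac, hbc⟩ := two_lt_card.mp h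
  rw [mem_toLeft] at ha hb hc
  have adj {x y : Fin m} (hx : .inl x ∈ S) (hy : .inl y ∈ S) (hxy : x ≠ y) :
      (pathGraph k).Adj (e ⟨_, hx⟩) (e ⟨_, hy⟩) :=
    e.map_adj_iff.mpr (by simpa using hxy)
  have h₁ := pathGraph_adj.mp (adj ha hb hab)
  have h₂ := pathGraph_adj.mp (adj ha hc hac)
  have h₃ := pathGraph_adj.mp (adj hb hc hbc)
  omega

section InducedPaths

variable [NeZero m]

def inducedPathVerts (c : Fin m) : Finset (Fin m ⊕ Fin n) :=
  ({0, c} : Finset (Fin m)).disjSum univ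

def inducedPathEmbedding {c : Fin m} (hc : c ≠ 0) : pathGraph (n + 2) ↪g lollipop m n where
  toFun := Fin.cons (.inl c) (Fin.cons (.inl 0) .inr)
  inj' := Fin.cons_injective_iff.mpr
    ⟨by rintro ⟨i, hi⟩; cases i using Fin.cases <;> simp_all [eq_comm],
      Fin.cons_injective_iff.mpr ⟨by simp, Sum.inr_injective⟩⟩
  map_rel_iff' {i j} := by
    have hc' : (c : ℕ) ≠ 0 := Fin.val_zero m ▸ Fin.val_ne_of_ne hc
    refine Fin.cases ?_ (fun i => Fin.cases ?_ (fun i => ?_) i) i <;>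
      refine Fin.cases ?_ (fun j => Fin.cases ?_ (fun j => ?_) j) j <;>
      simp [pathGraph_adj, hc, Ne.symm hc, hc']

lemma range_inducedPathEmbedding {c : Fin m} (hc : c ≠ 0) :
    Set.range (inducedPathEmbedding (n := n) hc) = ↑(inducedPathVerts (n := n) c) := by
  ext (a | b) <;> simp [inducedPathEmbedding, inducedPathVerts, Fin.range_cons, eq_comm, or_comm]

lemma nonempty_induce_inducedPathVerts_iso {c : Fin m} (hc : c ≠ 0) :
    Nonempty ((lollipop m n).induce ↑(inducedPathVerts (n := n) c) ≃g pathGraph (n + 2)) :=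
  ⟨range_inducedPathEmbedding hc ▸ (inducedPathEmbedding hc).isoInduceRange.symm⟩

lemma inducedPathVerts_injOn : Set.InjOn (inducedPathVerts (m := m) (n := n)) {c | c ≠ 0} := by
  intro c hc d hd h
  have hpair : ({0, c} : Finset (Fin m)) = {0, d} := by
    simpa [inducedPathVerts] using congrArg toLeft h
  have hcd : c ∈ ({0, d} : Finset (Fin m)) := hpair ▸ by simp
  simp only [mem_insert, mem_singleton] at hcd
  exact hcd.resolve_left hc

lemma zero_mem_toLeft_of_preconnected {S : Finset (Fin m ⊕ Fin n)}
    (hS : ((lollipop m n).induce (S : Set (Fin m ⊕ Fin n))).Preconnected)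
    {a : Fin m} {b : Fin n} (ha : a ∈ S.toLeft) (hb : b ∈ S.toRight) : 0 ∈ S.toLeft := by
  rw [mem_toLeft] at ha ⊢
  rw [mem_toRight] at hb
  obtain ⟨p⟩ := hS ⟨_, ha⟩ ⟨_, hb⟩
  obtain ⟨⟨⟨⟨x, hx⟩, ⟨y, hy⟩⟩, hxy⟩, -, hx', hy'⟩ :=
    p.exists_boundary_dart {v | (v : Fin m ⊕ Fin n).isLeft} (by simp) (by simp)
  rcases x with x | x <;> rcases y with y | y <;>
    simp only [Set.mem_ofPred_eq, Sum.isLeft_inl, Sum.isLeft_inr, Bool.false_eq_true,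
      not_true_eq_false, not_false_eq_true] at hx' hy'
  have hx0 : x = 0 := Fin.ext ((lollipop_adj_inl_inr.mp hxy).1.trans (Fin.val_zero m).symm)
  exact hx0 ▸ hx

lemma exists_eq_inducedPathVerts (hn : 1 ≤ n) {S : Finset (Fin m ⊕ Fin n)}
    (e : (lollipop m n).induce (S : Set (Fin m ⊕ Fin n)) ≃g pathGraph (n + 2)) :
    ∃ c ≠ 0, S = inducedPathVerts c := by
  have hcard : #S.toLeft + #S.toRight = n + 2 := by
    rw [card_toLeft_add_card_toRight]
    simpa using Fintype.card_congr e.toEquiv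
  have hleft_le := card_toLeft_le_two_of_iso_pathGraph e
  have hright_le : #S.toRight ≤ n := by simpa using card_le_univ S.toRight
  have hright : S.toRight = univ := eq_univ_of_card _ (by rw [Fintype.card_fin]; omega)
  obtain ⟨a, b, hab, hleft⟩ := card_eq_two.mp (by omega : #S.toLeft = 2)
  have h0 : 0 ∈ S.toLeft :=
    zero_mem_toLeft_of_preconnected (e.connected_iff.mpr (pathGraph_connected _)).preconnected
      (a := a) (by simp [hleft]) (b := ⟨0, hn⟩) (by simp [hright])
  obtain ⟨c, hc, hleft'⟩ : ∃ c ≠ 0, S.toLeft = {0, c} := by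
    rw [hleft] at h0 ⊢
    rcases mem_insert.mp h0 with rfl | h0
    · exact ⟨b, hab.symm, rfl⟩
    · rw [mem_singleton.mp h0]
      exact ⟨a, hab, pair_comm _ _⟩
  exact ⟨c, hc, by rw [← toLeft_disjSum_toRight (u := S), hleft', hright]; rfl⟩

theorem natCard_induced_pathGraph_lollipop (hn : 1 ≤ n) :
    Nat.card {S : Finset (Fin m ⊕ Fin n) //
      Nonempty ((lollipop m n).induce (S : Set (Fin m ⊕ Fin n)) ≃g pathGraph (n + 2))} =
      m - 1 := by
  let f (c : {c : Fin m // c ≠ 0}) : {S : Finset (Fin m ⊕ Fin n) //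
      Nonempty ((lollipop m n).induce (S : Set (Fin m ⊕ Fin n)) ≃g pathGraph (n + 2))} :=
    ⟨inducedPathVerts c, nonempty_induce_inducedPathVerts_iso c.2⟩
  have hf : Function.Bijective f := by
    refine ⟨fun c d h => Subtype.ext (inducedPathVerts_injOn c.2 d.2 (congrArg Subtype.val h)),
      ?_⟩
    rintro ⟨S, ⟨e⟩⟩
    obtain ⟨c, hc, rfl⟩ := exists_eq_inducedPathVerts hn e
    exact ⟨⟨c, hc⟩, rfl⟩
  rw [← Nat.card_eq_of_bijective f hf, Nat.card_eq_fintype_card]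
  simp

end InducedPaths

def lollipopCliqueCopy : Copy (⊤ : SimpleGraph (Fin m)) (lollipop m n) :=
  ⟨⟨Sum.inl, fun h => lollipop_adj_inl_inl.mpr h.ne⟩, Sum.inl_injective⟩

theorem descFactorial_le_two_mul_natCard_pathSubgraphs (k : ℕ) :
    m.descFactorial (k + 1) ≤
      2 * Nat.card {H : (lollipop m n).Subgraph // Nonempty (H.coe ≃g pathGraph (k + 1))} :=
  calc m.descFactorial (k + 1) = Nat.card (Fin (k + 1) ↪ Fin m) := by
        simp [Nat.card_eq_fintype_card, Fintype.card_embedding_eq]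
    _ ≤ Nat.card (Copy (pathGraph (k + 1)) (lollipop m n)) :=
        natCard_embedding_le_natCard_copy _ lollipopCliqueCopy
    _ ≤ _ * Nat.card (pathGraph (k + 1) ≃g pathGraph (k + 1)) :=
        natCard_copy_le_mul_natCard_aut _ _
    _ ≤ _ := by rw [mul_comm]; exact Nat.mul_le_mul_right _ (natCard_aut_pathGraph_le_two k)

theorem factorial_div_le_natCard_pathSubgraphs {k : ℕ} (hk : k + 1 ≤ m) :
    (m.factorial : ℝ) / (2 * (m - (k + 1)).factorial) ≤
      Nat.card {H : (lollipop m n).Subgraph // Nonempty (H.coe ≃g pathGraph (k + 1))} := by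
  rw [div_le_iff₀ (by positivity), ← Nat.factorial_mul_descFactorial hk]
  have h := Nat.cast_le (α := ℝ) |>.mpr
    (descFactorial_le_two_mul_natCard_pathSubgraphs (m := m) (n := n) k)
  have hpos : (0 : ℝ) < (m - (k + 1)).factorial := by positivity
  push_cast at h ⊢
  nlinarith

/-- For integers k ≥ 4 and m ≥ k, in the (m, k−2)-lollipop graph L the number
of induced copies of P_k is m − 1, the number of (not necessarily induced) k-vertex path
subgraphs is at least m!/(2·(m−k)!), and hence the fraction of k-vertex path subgraphs of L
whose vertex set induces a copy of P_k is at most 2·(m−1)·(m−k)!/m!. -/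
theorem lollipop_path_fraction (m k : ℕ) (hk : 4 ≤ k) (hm : k ≤ m) :
    Nat.card {S : Finset (Fin m ⊕ Fin (k - 2)) //
        Nonempty ((lollipop m (k - 2)).induce (↑S : Set (Fin m ⊕ Fin (k - 2)))
          ≃g SimpleGraph.pathGraph k)} = m - 1
    ∧ (m.factorial : ℝ) / (2 * (m - k).factorial)
        ≤ (Nat.card {H : (lollipop m (k - 2)).Subgraph //
            Nonempty (H.coe ≃g SimpleGraph.pathGraph k)} : ℝ)
    ∧ (Nat.card {H : (lollipop m (k - 2)).Subgraph //
            Nonempty (H.coe ≃g SimpleGraph.pathGraph k)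
              ∧ Nonempty ((lollipop m (k - 2)).induce H.verts
                  ≃g SimpleGraph.pathGraph k)} : ℝ)
        / (Nat.card {H : (lollipop m (k - 2)).Subgraph //
            Nonempty (H.coe ≃g SimpleGraph.pathGraph k)} : ℝ)
        ≤ 2 * (m - 1 : ℝ) * ((m - k).factorial : ℝ) / (m.factorial : ℝ) := by
  obtain ⟨n, rfl⟩ : ∃ n, k = n + 2 := ⟨k - 2, by omega⟩
  have : NeZero m := ⟨by omega⟩
  have hinduced := natCard_induced_pathGraph_lollipop (m := m) (n := n) (by omega)
  have hpaths := factorial_div_le_natCard_pathSubgraphs (n := n) (k := n + 1) hm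
  refine ⟨hinduced, hpaths, ?_⟩
  have hnum := (natCard_inducedSubgraph_le_natCard_finset (lollipop m n) (pathGraph (n + 2))).trans
    hinduced.le
  calc _ ≤ ((m - 1 : ℕ) : ℝ) / (m.factorial / (2 * (m - (n + 2)).factorial)) :=
        div_le_div₀ (Nat.cast_nonneg _) (Nat.cast_le.mpr hnum) (by positivity) hpaths
    _ = _ := by rw [Nat.cast_sub (by omega), div_div_eq_mul_div]; push_cast; ring
end
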